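/- arXiv:2512.12185 — 5 statements merged into one kernel-verified Lean document; each statement's English description precedes it below -/
import Mathlib

section
/- Let w be a permutation of ℤ with finitely many non-fixed points such that every descent of w is non-positive. Then w is completely determined by its values on the non-positive integers: if w and w' have Des ⊆ ℤ_{≤0} and w(r) = w'(r) for all r ≤ 0, then w = w'. Moreover, for i > 0, w(i) equals the i-th smallest integer not in w(ℤ_{≤0}). -/
/-- `w` has finitely many non-fixed points. -/
def FinSupp (w : Equiv.Perm ℤ) : Prop := {i : ℤ | w i ≠ i}.Finite

/-- Descent set of a permutation of ℤ. -/
def Des (w : Equiv.Perm ℤ) : Set ℤ := {i : ℤ | w (i + 1) < w i}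

/-- Number of inversions. -/
noncomputable def permLength (w : Equiv.Perm ℤ) : ℕ :=
  {p : ℤ × ℤ | p.1 < p.2 ∧ w p.2 < w p.1}.ncard

/-- Membership in `S_{[a,n]}`: all non-fixed points lie in `[a,n]`. -/
def InS (a n : ℤ) (w : Equiv.Perm ℤ) : Prop := ∀ i : ℤ, w i ≠ i → a ≤ i ∧ i ≤ n

/-- Cover relation of the `k`-Bruhat order. -/
def BCover (k : ℤ) (u w : Equiv.Perm ℤ) : Prop :=
  ∃ i j : ℤ, i ≤ k ∧ k < j ∧ w = u * Equiv.swap i j ∧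
    permLength w = permLength u + 1

/-- The `k`-Bruhat order: reflexive-transitive closure of the cover relation. -/
def kBruhat (k : ℤ) : Equiv.Perm ℤ → Equiv.Perm ℤ → Prop :=
  Relation.ReflTransGen (BCover k)

/-- There is an increasing `k`-chain from `u` to `w`. -/
def IncTo (k : ℤ) (u w : Equiv.Perm ℤ) : Prop :=
  ∃ (m : ℕ) (us : ℕ → Equiv.Perm ℤ) (ab : ℕ → ℤ × ℤ),
    us 0 = u ∧ us m = w ∧
    (∀ i < m, (ab i).1 ≤ k ∧ k < (ab i).2 ∧
      us (i + 1) = us i * Equiv.swap (ab i).1 (ab i).2 ∧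
      permLength (us (i + 1)) = permLength (us i) + 1) ∧
    (∀ i j : ℕ, i < j → j < m → us i (ab i).1 < us j (ab j).1)

/-- `fix_{(lo,hi]}(u,w) = {u(t) : lo < t ≤ hi, u(t) = w(t)}`. -/
def fixSet (lo hi : ℤ) (u w : Equiv.Perm ℤ) : Set ℤ :=
  {m : ℤ | ∃ t : ℤ, lo < t ∧ t ≤ hi ∧ u t = m ∧ w t = m}

lemma mono_le_aux (w : Equiv.Perm ℤ) (hDes : Des w ⊆ Set.Iic 0) {i j : ℤ}
    (hi : 0 < i) (hij : i ≤ j) : w i ≤ w j := by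
  obtain ⟨n, rfl⟩ := Int.le.dest hij
  clear hij
  induction n with
  | zero => simp
  | succ n ih =>
    have h1 : w (i + n) ≤ w (i + n + 1) := by
      by_contra h
      push_neg at h
      have h2 : (i + n : ℤ) ∈ Des w := h
      have := hDes h2
      simp only [Set.mem_Iic] at this
      omega
    have h3 : (i + ((n : ℤ) + 1)) = (i + n) + 1 := by ring
    push_cast
    rw [h3]
    exact ih.trans h1

lemma mono_lt_aux (w : Equiv.Perm ℤ) (hDes : Des w ⊆ Set.Iic 0) {i j : ℤ}
    (hi : 0 < i) (hij : i < j) : w i < w j :=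
  lt_of_le_of_ne (mono_le_aux w hDes hi hij.le) (w.injective.ne hij.ne)

lemma step_aux (w w' : Equiv.Perm ℤ) (hD : Des w ⊆ Set.Iic 0)
    (hag : ∀ r : ℤ, r ≤ 0 → w r = w' r) (i : ℤ) (hi : 0 < i)
    (hprev : ∀ j : ℤ, 0 < j → j < i → w j = w' j) : w i ≤ w' i := by
  set j := w.symm (w' i) with hj
  have hwj : w j = w' i := w.apply_symm_apply _
  have hjpos : 0 < j := by
    by_contra h
    push_neg at h
    have : w' j = w' i := by rw [← hag j h, hwj]
    have := w'.injective this
    omega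
  have hij : i ≤ j := by
    by_contra h
    push_neg at h
    have : w' j = w' i := by rw [← hprev j hjpos h, hwj]
    have := w'.injective this
    omega
  calc w i ≤ w j := mono_le_aux w hD hi hij
    _ = w' i := hwj

theorem stmt2 (w : Equiv.Perm ℤ) (hw : FinSupp w) (hDes : Des w ⊆ Set.Iic 0) :
    (∀ w' : Equiv.Perm ℤ, FinSupp w' → Des w' ⊆ Set.Iic 0 →
        (∀ r : ℤ, r ≤ 0 → w r = w' r) → w = w') ∧
    (∀ i : ℤ, 0 < i →
        ({m : ℤ | m ∉ (⇑w) '' Set.Iic 0 ∧ m ≤ w i}).ncard = i.toNat) := by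
  constructor
  · intro w' _ hDes' hag
    have main : ∀ n : ℕ, ∀ i : ℤ, 0 < i → i ≤ n → w i = w' i := by
      intro n
      induction n using Nat.strong_induction_on with
      | _ n ih =>
        intro i hi hin
        have hprev : ∀ j : ℤ, 0 < j → j < i → w j = w' j := by
          intro j hj hji
          exact ih j.toNat (by omega) j hj (by omega)
        exact le_antisymm (step_aux w w' hDes hag i hi hprev)
          (step_aux w' w hDes' (fun r hr => (hag r hr).symm) i hi
            (fun j hj hji => (hprev j hj hji).symm))
    ext i
    rcases le_or_gt i 0 with h | h
    · exact hag i h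
    · exact main i.toNat i h (by omega)
  · intro i hi
    have hset : {m : ℤ | m ∉ (⇑w) '' Set.Iic 0 ∧ m ≤ w i} = ⇑w '' Set.Ioc 0 i := by
      ext m
      simp only [Set.mem_setOf_eq, Set.mem_image, Set.mem_Iic, Set.mem_Ioc]
      constructor
      · rintro ⟨hm1, hm2⟩
        refine ⟨w.symm m, ⟨?_, ?_⟩, w.apply_symm_apply m⟩
        · by_contra h
          push_neg at h
          exact hm1 ⟨w.symm m, h, w.apply_symm_apply m⟩
        · by_contra h
          push_neg at h
          have := mono_lt_aux w hDes hi h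
          rw [w.apply_symm_apply] at this
          omega
      · rintro ⟨j, ⟨hj1, hj2⟩, rfl⟩
        refine ⟨?_, ?_⟩
        · rintro ⟨r, hr, hrj⟩
          have := w.injective hrj
          omega
        · rcases eq_or_lt_of_le hj2 with rfl | h
          · exact le_refl _
          · exact (mono_lt_aux w hDes hj1 h).le
    rw [hset, Set.ncard_image_of_injective _ w.injective, ← Finset.coe_Ioc,
      Set.ncard_coe_finset, Int.card_Ioc]
    omega
end

section
/- Let u, w ∈ S_{[a,n]} with u →^k w (there is an increasing k-chain from u to w). Suppose i is a value of u on the interval (k,n], i.e., i = u(t₀) for some t₀ ∈ (k,n], but i is not a fixed value, i.e., there is no t ∈ (k,n] with u(t) = w(t) = i. Then there exists t ∈ [a,k] with w(t) ≥ i. -/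
/-!
In a cover `v ⋖ v (p q)` with `p ≤ k < q` one has `v p < v q`, because when `v p > v q` right
multiplication by `(p q)` does not increase the number of inversions. Hence along a
`k`-Bruhat chain the entries at positions `≤ k` only grow. The value `i`, starting right of `k`,
either never moves (and is then a fixed value) or is at some point carried to a position `t ≤ k`,
after which `w t ≥ i`; finally `t ≥ a`, since otherwise `u t = t = w t` would force `u t = i`.
-/

theorem Set.ncard_le_ncard_of_image_sdiff {α : Type*} {f : α → α} {A A' B : Set α}
    (hf : Function.Injective f) (hB : B.Finite) (himage : f '' (A \ B) = A' \ B)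
    (hinter : A ∩ B ⊆ A') : A.ncard ≤ A'.ncard := by
  by_cases hA' : A'.Finite
  · have hAB : (A \ B).Finite :=
      Set.Finite.of_finite_image (himage ▸ hA'.sdiff) hf.injOn
    have hA : A.Finite := (hB.inter_of_right A).union hAB |>.subset (by simp)
    calc A.ncard = (A ∩ B).ncard + (A \ B).ncard :=
          (Set.ncard_inter_add_ncard_sdiff_eq_ncard A B hA).symm
      _ ≤ (A' ∩ B).ncard + (A' \ B).ncard :=
          add_le_add (Set.ncard_le_ncard (Set.subset_inter hinter Set.inter_subset_right)
            (hA'.inter_of_left B)) (by rw [← himage, Set.ncard_image_of_injective _ hf])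
      _ = A'.ncard := Set.ncard_inter_add_ncard_sdiff_eq_ncard A' B hA'
  · have hAB : (A \ B).Infinite := fun hfin => Set.Infinite.sdiff hA' hB (himage ▸ hfin.image f)
    rw [(hAB.mono Set.sdiff_subset).ncard]
    exact Nat.zero_le _

def inversions (w : Equiv.Perm ℤ) : Set (ℤ × ℤ) := {p : ℤ × ℤ | p.1 < p.2 ∧ w p.2 < w p.1}

theorem permLength_eq_ncard_inversions (w : Equiv.Perm ℤ) :
    permLength w = (inversions w).ncard := rfl

theorem mem_inversions {w : Equiv.Perm ℤ} {x y : ℤ} :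
    (x, y) ∈ inversions w ↔ x < y ∧ w y < w x := Iff.rfl

/-- Outside the square `[p,q]²` the transposition `(p q)` preserves the order of the two entries
of a pair, so it matches the inversions of `v` and of `v * swap p q` there; inside, every
inversion of `v` stays one. -/
theorem permLength_le_permLength_mul_swap (v : Equiv.Perm ℤ) {p q : ℤ} (hpq : p ≤ q)
    (hv : v p ≤ v q) : permLength v ≤ permLength (v * Equiv.swap p q) := by
  set f : ℤ × ℤ → ℤ × ℤ := Prod.map (Equiv.swap p q) (Equiv.swap p q)
  have hf : Function.Involutive f := fun ⟨x, y⟩ => by simp [f]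
  rw [permLength_eq_ncard_inversions, permLength_eq_ncard_inversions]
  refine Set.ncard_le_ncard_of_image_sdiff (f := f) (B := Set.Icc p q ×ˢ Set.Icc p q)
    hf.injective ((Set.finite_Icc p q).prod (Set.finite_Icc p q)) ?_ ?_
  · rw [hf.image_eq_preimage_symm]
    ext ⟨x, y⟩
    simp only [f, Set.mem_preimage, Set.mem_sdiff, Prod.map_apply, mem_inversions,
      Set.mem_prod, Set.mem_Icc, Equiv.Perm.mul_apply, Equiv.swap_apply_def]
    split_ifs <;> subst_vars <;> omega
  · rintro ⟨x, y⟩ ⟨hxy, ⟨hx, hy⟩⟩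
    rw [mem_inversions] at hxy ⊢
    simp only [Set.mem_Icc] at hx hy
    simp only [Equiv.Perm.mul_apply, Equiv.swap_apply_def]
    split_ifs <;> subst_vars <;> omega

theorem lt_of_permLength_mul_swap_eq_succ {u : Equiv.Perm ℤ} {p q : ℤ} (hpq : p ≤ q)
    (hlen : permLength (u * Equiv.swap p q) = permLength u + 1) : u p < u q := by
  by_contra! hqp
  have hle := permLength_le_permLength_mul_swap (u * Equiv.swap p q) hpq
    (by simpa only [Equiv.Perm.mul_apply, Equiv.swap_apply_left, Equiv.swap_apply_right] using hqp)
  rw [Equiv.mul_swap_mul_self] at hle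
  omega

theorem BCover.apply_le {k : ℤ} {u w : Equiv.Perm ℤ} (h : BCover k u w) {t : ℤ} (ht : t ≤ k) :
    u t ≤ w t := by
  obtain ⟨p, q, hp, hq, rfl, hlen⟩ := h
  have hlt := lt_of_permLength_mul_swap_eq_succ (by omega) hlen
  rw [Equiv.Perm.mul_apply, Equiv.swap_apply_def]
  split_ifs <;> subst_vars <;> omega

theorem kBruhat.apply_le {k : ℤ} {u w : Equiv.Perm ℤ} (h : kBruhat k u w) {t : ℤ}
    (ht : t ≤ k) : u t ≤ w t := by
  induction h with
  | refl => exact le_rfl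
  | tail _ hvw ih => exact ih.trans (hvw.apply_le ht)

theorem IncTo.kBruhat {k : ℤ} {u w : Equiv.Perm ℤ} (h : IncTo k u w) : kBruhat k u w := by
  obtain ⟨m, us, ab, rfl, rfl, hstep, -⟩ := h
  suffices ∀ j ≤ m, _root_.kBruhat k (us 0) (us j) from this m le_rfl
  intro j
  induction j with
  | zero => exact fun _ => Relation.ReflTransGen.refl
  | succ j ih =>
    intro hj
    obtain ⟨hp, hq, heq, hlen⟩ := hstep j hj
    exact (ih (by omega)).tail ⟨_, _, hp, hq, heq, hlen⟩

theorem kBruhat.apply_eq_or_exists_le {k : ℤ} {u w : Equiv.Perm ℤ} (h : kBruhat k u w)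
    {t₀ : ℤ} (ht₀ : k < t₀) : w t₀ = u t₀ ∨ ∃ t ≤ k, u t ≤ u t₀ ∧ u t₀ ≤ w t := by
  induction h with
  | refl => exact Or.inl rfl
  | @tail v w huv hvw ih =>
    rcases ih with hv | ⟨t, ht, hut, htv⟩
    · obtain ⟨p, q, hp, hq, rfl, hlen⟩ := hvw
      have hlt := lt_of_permLength_mul_swap_eq_succ (by omega) hlen
      by_cases hq₀ : t₀ = q
      · subst hq₀
        refine Or.inr ⟨p, hp, ?_, ?_⟩
        · have := kBruhat.apply_le huv hp
          omega
        · simp [hv]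
      · left
        rw [Equiv.Perm.mul_apply, Equiv.swap_apply_of_ne_of_ne (by omega) hq₀, hv]
    · exact Or.inr ⟨t, ht, hut, htv.trans (hvw.apply_le ht)⟩

theorem InS.apply_eq_of_lt {a n : ℤ} {w : Equiv.Perm ℤ} (hw : InS a n w) {t : ℤ} (ht : t < a) :
    w t = t := by
  by_contra hne
  exact absurd (hw t hne).1 (not_le.mpr ht)

theorem stmt8 (a n k : ℤ) (u w : Equiv.Perm ℤ) (hu : InS a n u) (hw : InS a n w)
    (h : IncTo k u w) (i t₀ : ℤ) (ht₀1 : k < t₀) (ht₀2 : t₀ ≤ n)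
    (hval : u t₀ = i)
    (hnotfix : ¬ ∃ t : ℤ, k < t ∧ t ≤ n ∧ u t = i ∧ w t = i) :
    ∃ t : ℤ, a ≤ t ∧ t ≤ k ∧ i ≤ w t := by
  subst hval
  rcases h.kBruhat.apply_eq_or_exists_le ht₀1 with hfix | ⟨t, htk, hut, htw⟩
  · exact absurd ⟨t₀, ht₀1, ht₀2, rfl, hfix⟩ hnotfix
  refine ⟨t, ?_, htk, htw⟩
  by_contra! hta
  have hut₀ : u t = u t₀ := by
    have := hu.apply_eq_of_lt hta
    have := hw.apply_eq_of_lt hta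
    omega
  have := u.injective hut₀
  omega
end

section
/- For permutations u, w ∈ S_n, u →^k w (there exists an increasing k-chain from u to w, a chain of k-Bruhat covers along which the smaller swapped value strictly increases) if and only if w·w₀ →_{n-k} u·w₀ (there exists a chain of (n-k)-Bruhat covers from w·w₀ to u·w₀ in which the left swap positions a_1, …, a_{s-1} are pairwise distinct), where w₀ = [n, n-1, …, 1] is the longest element of S_n. -/
/-- There is a chain of `k`-Bruhat covers from `u` to `w` whose left swap
positions `a_1, …, a_{s-1}` are pairwise distinct. -/
def DistinctLeftTo (k : ℤ) (u w : Equiv.Perm ℤ) : Prop :=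
  ∃ (m : ℕ) (us : ℕ → Equiv.Perm ℤ) (ab : ℕ → ℤ × ℤ),
    us 0 = u ∧ us m = w ∧
    (∀ i < m, (ab i).1 ≤ k ∧ k < (ab i).2 ∧
      us (i + 1) = us i * Equiv.swap (ab i).1 (ab i).2 ∧
      permLength (us (i + 1)) = permLength (us i) + 1) ∧
    (∀ i j : ℕ, i < j → j < m → (ab i).1 ≠ (ab j).1)

open Equiv Set

def invSet (σ : Perm ℤ) : Set (ℤ × ℤ) := {p | p.1 < p.2 ∧ σ p.2 < σ p.1}

lemma permLength_eq_ncard_invSet (σ : Perm ℤ) : permLength σ = (invSet σ).ncard := rfl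

def pairsIn (a n : ℤ) : Set (ℤ × ℤ) := {p | a ≤ p.1 ∧ p.1 < p.2 ∧ p.2 ≤ n}

lemma pairsIn_finite (a n : ℤ) : (pairsIn a n).Finite :=
  ((finite_Icc a n).prod (finite_Icc a n)).subset fun _ ⟨h1, h2, h3⟩ =>
    ⟨⟨h1, by omega⟩, ⟨by omega, h3⟩⟩

section Support

variable {a n : ℤ} {σ ρ : Perm ℤ}

lemma InS.mul (hσ : InS a n σ) (hρ : InS a n ρ) : InS a n (σ * ρ) := by
  intro x hx
  by_cases h : ρ x = x
  · exact hσ x (by rwa [Perm.mul_apply, h] at hx)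
  · exact hρ x h

lemma InS.finSupp (hσ : InS a n σ) : FinSupp σ :=
  (finite_Icc a n).subset fun x hx => hσ x hx

lemma FinSupp.exists_inS (hσ : FinSupp σ) : ∃ a n, InS a n σ := by
  obtain ⟨n, hn⟩ := hσ.bddAbove
  obtain ⟨a, ha⟩ := hσ.bddBelow
  exact ⟨a, n, fun x hx => ⟨ha hx, hn hx⟩⟩

lemma FinSupp.mul_swap (hσ : FinSupp σ) (i j : ℤ) : FinSupp (σ * swap i j) := by
  refine (hσ.union (toFinite {i, j})).subset fun x hx => ?_
  by_cases hxi : x = i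
  · exact Or.inr (Or.inl hxi)
  by_cases hxj : x = j
  · exact Or.inr (Or.inr hxj)
  exact Or.inl (by simpa [swap_apply_of_ne_of_ne hxi hxj] using hx)

lemma InS.invSet_subset (hσ : InS a n σ) : invSet σ ⊆ pairsIn a n := by
  rintro ⟨p, q⟩ ⟨hpq, hinv⟩
  have bounds (x : ℤ) (hx : σ x ≠ x) : a ≤ x ∧ x ≤ n ∧ a ≤ σ x ∧ σ x ≤ n :=
    ⟨(hσ x hx).1, (hσ x hx).2, hσ _ fun h => hx (σ.injective h)⟩
  simp only at hpq hinv
  by_cases hp : σ p = p <;> by_cases hq : σ q = q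
  · omega
  · have := bounds q hq; exact ⟨by omega, hpq, by omega⟩
  · have := bounds p hp; exact ⟨by omega, hpq, by omega⟩
  · have := bounds p hp; have := bounds q hq; exact ⟨by omega, hpq, by omega⟩

lemma FinSupp.invSet_finite (hσ : FinSupp σ) : (invSet σ).Finite := by
  obtain ⟨a, n, h⟩ := hσ.exists_inS
  exact (pairsIn_finite a n).subset h.invSet_subset

lemma InS.left_mem_of_mul_swap {x y : ℤ} (hσ : InS a n σ) (hσ' : InS a n (σ * swap x y))
    (hxy : x ≠ y) : a ≤ x ∧ x ≤ n := by
  by_contra hx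
  have fixed : σ x = x := Classical.byContradiction fun h => hx (hσ x h)
  have fixed' : (σ * swap x y) x = x := Classical.byContradiction fun h => hx (hσ' x h)
  rw [Perm.mul_apply, swap_apply_left, ← fixed] at fixed'
  exact hxy (σ.injective fixed').symm

end Support

section Length

variable {σ : Perm ℤ} {i j : ℤ}

lemma mul_swap_inv_of_swap_reverses (hij : i < j) (hσ : σ i < σ j) {p q : ℤ} (hpq : p < q)
    (hrev : swap i j q < swap i j p) (hinv : σ q < σ p) :
    σ (swap i j q) < σ (swap i j p) := by
  simp only [swap_apply_def] at hrev ⊢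
  split_ifs at hrev ⊢ <;> subst_vars <;> omega

lemma permLength_add_one_le_mul_swap (hfin : FinSupp σ) (hij : i < j) (hσ : σ i < σ j) :
    permLength σ + 1 ≤ permLength (σ * swap i j) := by
  set τ := swap i j
  -- On pairs whose order `τ` preserves, `Prod.map τ τ` matches the inversions of `σ` and `σ τ`;
  -- the inversions of `σ` among the other pairs survive, and `(i, j)` is a new one.
  set P : Set (ℤ × ℤ) := {p | τ p.1 < τ p.2}
  have preserved : invSet (σ * τ) ∩ P = Prod.map τ τ ⁻¹' (invSet σ ∩ P) := by
    ext ⟨p, q⟩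
    simp only [invSet, P, τ, mem_inter_iff, mem_ofPred_eq, mem_preimage, Prod.map,
      Perm.mul_apply, swap_apply_self]
    tauto
  have reversed : insert (i, j) (invSet σ \ P) ⊆ invSet (σ * τ) \ P := by
    rintro ⟨p, q⟩ (hpq | ⟨⟨hpq, hinv⟩, hP⟩)
    · obtain ⟨rfl, rfl⟩ := Prod.mk.inj hpq
      refine ⟨⟨hij, by simpa [τ] using hσ⟩, ?_⟩
      simp only [P, τ, mem_ofPred_eq, swap_apply_left, swap_apply_right]
      omega
    · have hrev : τ q < τ p := lt_of_le_of_ne (not_lt.1 hP) (τ.injective.ne hpq.ne')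
      exact ⟨⟨hpq, mul_swap_inv_of_swap_reverses hij hσ hpq hrev hinv⟩, hP⟩
  have hij_notMem : (i, j) ∉ invSet σ \ P := fun h => by
    have := h.1.2
    simp only at this
    omega
  have hfin' := (hfin.mul_swap i j).invSet_finite
  calc permLength σ + 1 = (invSet σ ∩ P).ncard + ((invSet σ \ P).ncard + 1) := by
        rw [← add_assoc, ncard_inter_add_ncard_sdiff_eq_ncard _ _ hfin.invSet_finite,
          permLength_eq_ncard_invSet]
    _ = (invSet (σ * τ) ∩ P).ncard + (insert (i, j) (invSet σ \ P)).ncard := by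
        rw [preserved, ncard_preimage_of_injective_subset_range
            (Prod.map_injective.2 ⟨τ.injective, τ.injective⟩)
            ((Prod.map_surjective.2 ⟨τ.surjective, τ.surjective⟩).range_eq ▸ subset_univ _),
          ncard_insert_of_notMem hij_notMem hfin.invSet_finite.sdiff]
    _ ≤ (invSet (σ * τ) ∩ P).ncard + (invSet (σ * τ) \ P).ncard :=
        Nat.add_le_add_left (ncard_le_ncard reversed hfin'.sdiff) _
    _ = permLength (σ * τ) := ncard_inter_add_ncard_sdiff_eq_ncard _ _ hfin'

lemma lt_of_permLength_mul_swap (hfin : FinSupp σ) (hij : i < j)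
    (hlen : permLength (σ * swap i j) = permLength σ + 1) : σ i < σ j := by
  by_contra! hle
  have hlt : σ j < σ i := lt_of_le_of_ne hle (σ.injective.ne hij.ne')
  have := permLength_add_one_le_mul_swap (hfin.mul_swap i j) hij (by simpa using hlt)
  rw [mul_swap_mul_self] at this
  omega

end Length

section Exchange

variable {k a b c d : ℤ} {x : Perm ℤ}

lemma ne_of_cover_of_apply_le (hx : FinSupp x) (hab : a < b)
    (h₁ : permLength (x * swap a b) = permLength x + 1) (hbad : (x * swap a b) c ≤ x a) :
    c ≠ a := by
  rintro rfl
  have := lt_of_permLength_mul_swap hx hab h₁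
  simp only [Perm.mul_apply, swap_apply_left] at hbad
  omega

lemma exchange_covers (hx : FinSupp x) (ha : a ≤ k) (hb : k < b) (hc : c ≤ k) (hd : k < d)
    (hca : c ≠ a) (hbd : b ≠ d)
    (h₁ : permLength (x * swap a b) = permLength x + 1)
    (h₂ : permLength (x * swap a b * swap c d) = permLength (x * swap a b) + 1) :
    x * swap c d * swap a b = x * swap a b * swap c d ∧
      permLength (x * swap c d) = permLength x + 1 ∧
      permLength (x * swap c d * swap a b) = permLength (x * swap c d) + 1 := by
  have hcomm : x * swap c d * swap a b = x * swap a b * swap c d := by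
    have hnodup : [c, d, a, b].Nodup := by
      simp only [List.nodup_cons, List.mem_cons, List.not_mem_nil, or_false, not_or,
        not_false_eq_true, List.nodup_nil, and_self, and_true]
      omega
    rw [mul_assoc, mul_assoc, (Perm.disjoint_swap_swap hnodup).commute.eq]
  have hxab := lt_of_permLength_mul_swap hx (by omega) h₁
  have hxcd : x c < x d := by
    have := lt_of_permLength_mul_swap (hx.mul_swap a b) (by omega) h₂
    rwa [Perm.mul_apply, Perm.mul_apply, swap_apply_of_ne_of_ne hca (by omega),
      swap_apply_of_ne_of_ne (by omega) (by omega)] at this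
  have step_cd := permLength_add_one_le_mul_swap hx (by omega) hxcd
  have step_ab := permLength_add_one_le_mul_swap (hx.mul_swap c d) (i := a) (j := b) (by omega)
    (by rwa [Perm.mul_apply, Perm.mul_apply, swap_apply_of_ne_of_ne hca.symm (by omega),
      swap_apply_of_ne_of_ne (by omega) (by omega)])
  rw [hcomm] at step_ab
  exact ⟨hcomm, by omega, by rw [hcomm]; omega⟩

end Exchange

def IsLongestElement (n : ℤ) (w0 : Perm ℤ) : Prop :=
  (∀ i : ℤ, 1 ≤ i → i ≤ n → w0 i = n + 1 - i) ∧ ∀ i : ℤ, i < 1 ∨ n < i → w0 i = i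

namespace IsLongestElement

variable {n : ℤ} {w0 : Perm ℤ}

lemma mul_self (hw0 : IsLongestElement n w0) : w0 * w0 = 1 := by
  ext x
  simp only [Perm.mul_apply, Perm.one_apply]
  by_cases hx : 1 ≤ x ∧ x ≤ n
  · rw [hw0.1 x hx.1 hx.2, hw0.1 _ (by omega) (by omega)]
    omega
  · rw [hw0.2 x (by omega), hw0.2 x (by omega)]

lemma inS (hw0 : IsLongestElement n w0) : InS 1 n w0 :=
  fun x hx => Classical.byContradiction fun h => hx (hw0.2 x (by omega))

lemma permLength_mul_add_permLength (hw0 : IsLongestElement n w0) {σ : Perm ℤ}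
    (hσ : InS 1 n σ) : permLength (σ * w0) + permLength σ = (pairsIn 1 n).ncard := by
  set Φ : ℤ × ℤ → ℤ × ℤ := fun p => (n + 1 - p.2, n + 1 - p.1)
  have hΦ : invSet (σ * w0) = Φ ⁻¹' (pairsIn 1 n \ invSet σ) := by
    ext ⟨p, q⟩
    have mem_pairs : (p, q) ∈ pairsIn 1 n ↔ Φ (p, q) ∈ pairsIn 1 n := by
      simp only [pairsIn, Φ, mem_ofPred_eq]
      omega
    refine ⟨fun h => ?_, fun h => ?_⟩
    all_goals
      have hpq : (p, q) ∈ pairsIn 1 n := by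
        first
          | exact (hσ.mul hw0.inS).invSet_subset h
          | exact mem_pairs.2 h.1
      obtain ⟨hp, hpq, hq⟩ := hpq
    all_goals
      simp only [invSet, pairsIn, Φ, mem_sdiff, mem_ofPred_eq, mem_preimage, Perm.mul_apply,
        hw0.1 p hp (by omega), hw0.1 q (by omega) hq] at h ⊢
      have : σ (n + 1 - q) ≠ σ (n + 1 - p) := σ.injective.ne (by omega)
      omega
  have hΦinj : Function.Injective Φ := fun p q h => by
    simp only [Φ, Prod.mk.injEq] at h
    exact Prod.ext (by omega) (by omega)
  have hΦsurj : Function.Surjective Φ := fun p => ⟨(n + 1 - p.2, n + 1 - p.1), by simp [Φ]⟩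
  have hsub := hσ.invSet_subset
  rw [permLength_eq_ncard_invSet, permLength_eq_ncard_invSet, hΦ,
    ncard_preimage_of_injective_subset_range hΦinj (hΦsurj.range_eq ▸ subset_univ _),
    ncard_sdiff hsub ((pairsIn_finite 1 n).subset hsub),
    Nat.sub_add_cancel (ncard_le_ncard hsub (pairsIn_finite 1 n))]

lemma mul_eq_mul_swap_mul_mul_swap (hw0 : IsLongestElement n w0) (x : Perm ℤ) {a b : ℤ}
    (ha : 1 ≤ a) (hb : b ≤ n) (hab : a < b) :
    x * w0 = x * swap a b * w0 * swap (n + 1 - b) (n + 1 - a) := by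
  have hinv : w0⁻¹ = w0 := inv_eq_of_mul_eq_one_right hw0.mul_self
  rw [← hw0.1 a ha (by omega), ← hw0.1 b (by omega) hb, swap_apply_apply, hinv, swap_comm b a]
  calc x * w0 = x * (swap a b * ((w0 * w0) * swap a b)) * w0 := by
        rw [hw0.mul_self, one_mul, swap_mul_self, mul_one]
    _ = _ := by group

end IsLongestElement

section Sequences

lemma injOn_Iio_iff {α : Type*} {f : ℕ → α} {m : ℕ} :
    InjOn f (Iio m) ↔ ∀ i j, i < j → j < m → f i ≠ f j := by
  refine ⟨fun h i j hij hjm he => hij.ne (h (mem_Iio.2 (hij.trans hjm)) hjm he), ?_⟩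
  intro h i hi j hj he
  rcases lt_trichotomy i j with hij | rfl | hji
  · exact absurd he (h i j hij hj)
  · rfl
  · exact absurd he.symm (h j i hji hi)

lemma injOn_Iio_const_sub_rev {f : ℕ → ℤ} {m : ℕ} (c : ℤ) (hf : InjOn f (Iio m)) :
    InjOn (fun i => c - f (m - 1 - i)) (Iio m) := fun i hi j hj h => by
  simp only [mem_Iio] at hi hj
  have := hf (show m - 1 - i < m by omega) (show m - 1 - j < m by omega) (by simpa using h)
  omega

def descPairs (m : ℕ) (v : ℕ → ℤ) : Finset (ℕ × ℕ) :=
  (Finset.range m ×ˢ Finset.range m).filter fun p => p.1 < p.2 ∧ v p.2 ≤ v p.1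

lemma mem_descPairs {m : ℕ} {v : ℕ → ℤ} {p : ℕ × ℕ} :
    p ∈ descPairs m v ↔ p.1 < p.2 ∧ p.2 < m ∧ v p.2 ≤ v p.1 := by
  simp only [descPairs, Finset.mem_filter, Finset.mem_product, Finset.mem_range]
  omega

lemma card_descPairs_comp_swap {m t : ℕ} {v : ℕ → ℤ} (ht : t + 1 < m) (hv : v (t + 1) < v t) :
    (descPairs m (v ∘ swap t (t + 1))).card + 1 = (descPairs m v).card := by
  set e := swap t (t + 1)
  have mem_t : (t, t + 1) ∈ descPairs m v := mem_descPairs.2 ⟨by omega, ht, hv.le⟩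
  rw [← Finset.card_erase_add_one mem_t]
  congr 1
  refine Finset.card_nbij' (Prod.map e e) (Prod.map e e) ?_ ?_
    (fun _ _ => by simp [e, Prod.map]) (fun _ _ => by simp [e, Prod.map]) <;>
  · rintro ⟨p, q⟩ h
    simp only [Finset.mem_coe, mem_descPairs, Finset.mem_erase, Function.comp, Prod.map,
      ne_eq, Prod.mk.injEq, e, swap_apply_def] at h ⊢
    split_ifs at h ⊢ <;> subst_vars <;> omega

end Sequences

def IsCoverChain (k : ℤ) (m : ℕ) (us : ℕ → Perm ℤ) (ab : ℕ → ℤ × ℤ) : Prop :=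
  ∀ i < m, (ab i).1 ≤ k ∧ k < (ab i).2 ∧
    us (i + 1) = us i * swap (ab i).1 (ab i).2 ∧
    permLength (us (i + 1)) = permLength (us i) + 1

def leftValue (us : ℕ → Perm ℤ) (ab : ℕ → ℤ × ℤ) (i : ℕ) : ℤ := us i (ab i).1

namespace IsCoverChain

variable {k : ℤ} {m : ℕ} {us : ℕ → Perm ℤ} {ab : ℕ → ℤ × ℤ}

lemma apply_succ (hc : IsCoverChain k m us ab) {i : ℕ} (hi : i < m) (x : ℤ) :
    us (i + 1) x = us i (swap (ab i).1 (ab i).2 x) := by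
  rw [(hc i hi).2.2.1, Perm.mul_apply]

lemma finSupp (hc : IsCoverChain k m us ab) (h0 : FinSupp (us 0)) {i : ℕ} (hi : i ≤ m) :
    FinSupp (us i) := by
  induction i with
  | zero => exact h0
  | succ i ih =>
    rw [(hc i hi).2.2.1]
    exact (ih (by omega)).mul_swap _ _

lemma apply_fst_lt_apply_snd (hc : IsCoverChain k m us ab) (h0 : FinSupp (us 0)) {i : ℕ}
    (hi : i < m) : us i (ab i).1 < us i (ab i).2 := by
  obtain ⟨ha, hb, hstep, hlen⟩ := hc i hi
  rw [hstep] at hlen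
  exact lt_of_permLength_mul_swap (hc.finSupp h0 hi.le) (by omega) hlen

lemma monotoneOn_apply (hc : IsCoverChain k m us ab) (h0 : FinSupp (us 0)) {p : ℤ}
    (hp : p ≤ k) : MonotoneOn (fun i => us i p) (Iic m) := by
  refine monotoneOn_of_le_succ ordConnected_Iic fun i _ _ hi => ?_
  simp only [Order.succ_eq_add_one, mem_Iic] at hi ⊢
  rw [hc.apply_succ hi]
  by_cases hpa : p = (ab i).1
  · rw [hpa, swap_apply_left]
    exact (hc.apply_fst_lt_apply_snd h0 hi).le
  · rw [swap_apply_of_ne_of_ne hpa (by have := (hc i hi).2.1; omega)]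

lemma antitoneOn_apply (hc : IsCoverChain k m us ab) (h0 : FinSupp (us 0)) {p : ℤ}
    (hp : k < p) : AntitoneOn (fun i => us i p) (Iic m) := by
  refine antitoneOn_of_succ_le ordConnected_Iic fun i _ _ hi => ?_
  simp only [Order.succ_eq_add_one, mem_Iic] at hi ⊢
  rw [hc.apply_succ hi]
  by_cases hpb : p = (ab i).2
  · rw [hpb, swap_apply_right]
    exact (hc.apply_fst_lt_apply_snd h0 hi).le
  · rw [swap_apply_of_ne_of_ne (by have := (hc i hi).1; omega) hpb]

lemma apply_eq_self (hc : IsCoverChain k m us ab) (h0 : FinSupp (us 0)) {p : ℤ}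
    (hp0 : us 0 p = p) (hpm : us m p = p) {i : ℕ} (hi : i ≤ m) : us i p = p := by
  have h0i : 0 ∈ Iic m := mem_Iic.2 m.zero_le
  have hmi : m ∈ Iic m := mem_Iic.2 le_rfl
  rcases le_or_gt p k with hp | hp
  · have h₁ : us 0 p ≤ us i p := hc.monotoneOn_apply h0 hp h0i (mem_Iic.2 hi) i.zero_le
    have h₂ : us i p ≤ us m p := hc.monotoneOn_apply h0 hp (mem_Iic.2 hi) hmi hi
    omega
  · have h₁ : us i p ≤ us 0 p := hc.antitoneOn_apply h0 hp h0i (mem_Iic.2 hi) i.zero_le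
    have h₂ : us m p ≤ us i p := hc.antitoneOn_apply h0 hp (mem_Iic.2 hi) hmi hi
    omega

lemma inS (hc : IsCoverChain k m us ab) (h0 : FinSupp (us 0)) {a n : ℤ}
    (hu : InS a n (us 0)) (hw : InS a n (us m)) {i : ℕ} (hi : i ≤ m) : InS a n (us i) :=
  fun p hp => Classical.byContradiction fun hout => hp <| hc.apply_eq_self h0
    (Classical.byContradiction fun h => hout (hu p h))
    (Classical.byContradiction fun h => hout (hw p h)) hi

lemma swap_mem_Icc (hc : IsCoverChain k m us ab) (h0 : FinSupp (us 0)) {a n : ℤ}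
    (hu : InS a n (us 0)) (hw : InS a n (us m)) {i : ℕ} (hi : i < m) :
    a ≤ (ab i).1 ∧ (ab i).2 ≤ n := by
  obtain ⟨ha, hb, hstep, -⟩ := hc i hi
  have hσ := hc.inS h0 hu hw hi.le
  have hσ' := hc.inS h0 hu hw (Nat.succ_le_of_lt hi)
  rw [hstep] at hσ'
  have hleft := hσ.left_mem_of_mul_swap hσ' (by omega)
  rw [swap_comm] at hσ'
  have hright := hσ.left_mem_of_mul_swap hσ' (by omega)
  exact ⟨hleft.1, hright.2⟩

lemma injOn_snd_of_strictMonoOn (hc : IsCoverChain k m us ab) (h0 : FinSupp (us 0))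
    (hinc : StrictMonoOn (leftValue us ab) (Iio m)) : InjOn (fun i => (ab i).2) (Iio m) := by
  refine injOn_Iio_iff.2 fun i j hij hjm hb => ?_
  have hi : i < m := hij.trans hjm
  have after_i : us (i + 1) (ab i).2 = us i (ab i).1 := by
    rw [hc.apply_succ hi, swap_apply_right]
  have decreasing : us j (ab i).2 ≤ us (i + 1) (ab i).2 :=
    hc.antitoneOn_apply h0 (hc i hi).2.1 (mem_Iic.2 (by omega)) (mem_Iic.2 hjm.le) hij
  have at_j : us j (ab j).1 < us j (ab i).2 := hb ▸ hc.apply_fst_lt_apply_snd h0 hjm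
  have := hinc hi hjm hij
  simp only [leftValue] at this
  omega

lemma reverse (hc : IsCoverChain k m us ab) {n : ℤ} {w0 : Perm ℤ}
    (hw0 : IsLongestElement n w0) (hu : InS 1 n (us 0)) (hw : InS 1 n (us m)) :
    IsCoverChain (n - k) m (fun i => us (m - i) * w0)
      (fun i => (n + 1 - (ab (m - 1 - i)).2, n + 1 - (ab (m - 1 - i)).1)) := by
  intro i hi
  obtain ⟨ha, hb, hstep, hlen⟩ := hc (m - 1 - i) (by omega)
  obtain ⟨ha1, hbn⟩ := hc.swap_mem_Icc hu.finSupp hu hw (i := m - 1 - i) (by omega)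
  have hlen_i := hw0.permLength_mul_add_permLength
    (hc.inS hu.finSupp hu hw (i := m - 1 - i) (by omega))
  have hlen_succ := hw0.permLength_mul_add_permLength
    (hc.inS hu.finSupp hu hw (i := m - 1 - i + 1) (by omega))
  have e1 : m - (i + 1) = m - 1 - i := by omega
  have e2 : m - i = m - 1 - i + 1 := by omega
  dsimp only
  rw [e1, e2]
  refine ⟨by omega, by omega, ?_, by omega⟩
  rw [hstep]
  exact hw0.mul_eq_mul_swap_mul_mul_swap _ ha1 hbn (by omega)

lemma update_comp_swap (hc : IsCoverChain k m us ab) {t : ℕ} (ht : t + 1 < m) {y : Perm ℤ}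
    (hy : y = us t * swap (ab (t + 1)).1 (ab (t + 1)).2)
    (hy_len : permLength y = permLength (us t) + 1)
    (hy' : us (t + 1 + 1) = y * swap (ab t).1 (ab t).2)
    (hy'_len : permLength (us (t + 1 + 1)) = permLength y + 1) :
    IsCoverChain k m (Function.update us (t + 1) y) (ab ∘ swap t (t + 1)) := by
  intro s hs
  by_cases hst : s = t
  · subst hst
    simp only [Function.comp, swap_apply_left, Function.update_self,
      Function.update_of_ne (by omega : s ≠ s + 1)]
    exact ⟨(hc (s + 1) ht).1, (hc (s + 1) ht).2.1, hy, hy_len⟩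
  by_cases hst' : s = t + 1
  · subst hst'
    simp only [Function.comp, swap_apply_right, Function.update_self,
      Function.update_of_ne (by omega : t + 1 + 1 ≠ t + 1)]
    exact ⟨(hc t (by omega)).1, (hc t (by omega)).2.1, hy', hy'_len⟩
  · simp only [Function.comp, swap_apply_of_ne_of_ne hst hst', Function.update_of_ne hst',
      Function.update_of_ne (by omega : s + 1 ≠ t + 1)]
    exact hc s hs

lemma exists_exchange (hc : IsCoverChain k m us ab) (h0 : FinSupp (us 0))
    (hinj : InjOn (fun i => (ab i).2) (Iio m)) {t : ℕ} (ht : t + 1 < m)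
    (hbad : leftValue us ab (t + 1) ≤ leftValue us ab t) :
    leftValue us ab (t + 1) < leftValue us ab t ∧
      ∃ us' : ℕ → Perm ℤ, us' 0 = us 0 ∧ us' m = us m ∧
        IsCoverChain k m us' (ab ∘ swap t (t + 1)) ∧
        leftValue us' (ab ∘ swap t (t + 1)) = leftValue us ab ∘ swap t (t + 1) := by
  obtain ⟨ha, hb, hstep, hlen⟩ := hc t (by omega)
  obtain ⟨hc', hd, hstep', hlen'⟩ := hc (t + 1) ht
  set x := us t
  set a := (ab t).1
  set b := (ab t).2
  set c := (ab (t + 1)).1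
  set d := (ab (t + 1)).2
  have hx : FinSupp x := hc.finSupp h0 (by omega)
  have hbd : b ≠ d := hinj.ne (mem_Iio.2 (by omega)) (mem_Iio.2 ht) (by omega)
  unfold leftValue at hbad ⊢
  rw [hstep] at hlen hlen' hstep' hbad ⊢
  rw [hstep'] at hlen'
  have hca : c ≠ a := ne_of_cover_of_apply_le hx (by omega) hlen hbad
  obtain ⟨hcomm, hlen_cd, hlen_ab⟩ := exchange_covers hx ha hb hc' hd hca hbd hlen hlen'
  have hxc : (x * swap a b) c = x c := by
    rw [Perm.mul_apply, swap_apply_of_ne_of_ne hca (by omega)]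
  have hxa : (x * swap c d) a = x a := by
    rw [Perm.mul_apply, swap_apply_of_ne_of_ne hca.symm (by omega)]
  refine ⟨?_, Function.update us (t + 1) (x * swap c d), Function.update_of_ne (by omega) _ _,
    Function.update_of_ne (by omega) _ _, ?_, ?_⟩
  · rw [hxc] at hbad ⊢
    exact lt_of_le_of_ne hbad (x.injective.ne hca)
  · exact hc.update_comp_swap ht rfl hlen_cd (by rw [hstep', ← hcomm])
      (by rw [hstep', ← hcomm, hlen_ab])
  · funext s
    by_cases hst : s = t
    · subst hst
      simp only [Function.comp, swap_apply_left, Function.update_of_ne (by omega : s ≠ s + 1)]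
      rw [hstep, hxc]
    by_cases hst' : s = t + 1
    · subst hst'
      simp only [Function.comp, swap_apply_right, Function.update_self]
      exact hxa
    · simp only [Function.comp, swap_apply_of_ne_of_ne hst hst', Function.update_of_ne hst']

lemma exists_strictMonoOn_leftValue (hc : IsCoverChain k m us ab) (h0 : FinSupp (us 0))
    (hinj : InjOn (fun i => (ab i).2) (Iio m)) :
    ∃ (us' : ℕ → Perm ℤ) (ab' : ℕ → ℤ × ℤ), us' 0 = us 0 ∧ us' m = us m ∧
      IsCoverChain k m us' ab' ∧ StrictMonoOn (leftValue us' ab') (Iio m) := by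
  induction hN : (descPairs m (leftValue us ab)).card using Nat.strong_induction_on
    generalizing us ab with
  | _ N ih =>
  by_cases hsorted : ∀ t, t + 1 < m → leftValue us ab t < leftValue us ab (t + 1)
  · refine ⟨us, ab, rfl, rfl, hc, strictMonoOn_of_lt_succ ordConnected_Iio fun t _ _ ht => ?_⟩
    simp only [Order.succ_eq_add_one, mem_Iio] at ht ⊢
    exact hsorted t ht
  obtain ⟨t, ht, hbad⟩ : ∃ t, t + 1 < m ∧ leftValue us ab (t + 1) ≤ leftValue us ab t := by
    simpa using hsorted
  obtain ⟨hlt, us', h0', hm', hc', hv'⟩ := hc.exists_exchange h0 hinj ht hbad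
  have hmaps : MapsTo (swap t (t + 1)) (Iio m) (Iio m) := fun i hi => by
    simp only [mem_Iio, swap_apply_def] at hi ⊢
    split_ifs <;> omega
  obtain ⟨us'', ab'', h0'', hm'', hc'', hmono⟩ := ih _
    (by rw [hv', ← hN, ← card_descPairs_comp_swap ht hlt]; omega) hc' (h0' ▸ h0)
    (hinj.comp (swap t (t + 1)).injective.injOn hmaps) rfl
  exact ⟨us'', ab'', h0''.trans h0', hm''.trans hm', hc'', hmono⟩

end IsCoverChain

theorem stmt11_general (n k : ℤ)
    (u w w0 : Equiv.Perm ℤ) (hu : InS 1 n u) (hw : InS 1 n w)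
    (hw0a : ∀ i : ℤ, 1 ≤ i → i ≤ n → w0 i = n + 1 - i)
    (hw0b : ∀ i : ℤ, i < 1 ∨ n < i → w0 i = i) :
    IncTo k u w ↔ DistinctLeftTo (n - k) (w * w0) (u * w0) := by
  have hw0 : IsLongestElement n w0 := ⟨hw0a, hw0b⟩
  constructor
  · rintro ⟨m, us, ab, rfl, rfl, hc, hinc⟩
    have hinj := IsCoverChain.injOn_snd_of_strictMonoOn hc hu.finSupp
      fun i _ j hj hij => hinc i j hij hj
    exact ⟨m, fun i => us (m - i) * w0,
      fun i => (n + 1 - (ab (m - 1 - i)).2, n + 1 - (ab (m - 1 - i)).1), by simp, by simp,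
      IsCoverChain.reverse hc hw0 hu hw, injOn_Iio_iff.1 (injOn_Iio_const_sub_rev (n + 1) hinj)⟩
  · rintro ⟨m, us, ab, h0, hm, hc, hdist⟩
    have hrev := IsCoverChain.reverse hc hw0 (h0 ▸ hw.mul hw0.inS) (hm ▸ hu.mul hw0.inS)
    rw [sub_sub_cancel] at hrev
    have hcancel (σ : Perm ℤ) : σ * w0 * w0 = σ := by rw [mul_assoc, hw0.mul_self, mul_one]
    have hu' : us (m - 0) * w0 = u := by rw [Nat.sub_zero, hm, hcancel]
    have hw' : us (m - m) * w0 = w := by rw [Nat.sub_self, h0, hcancel]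
    obtain ⟨us', ab', h0', hm', hc', hmono⟩ := hrev.exists_strictMonoOn_leftValue
      (hu' ▸ hu.finSupp) (injOn_Iio_const_sub_rev (n + 1) (injOn_Iio_iff.2 hdist))
    exact ⟨m, us', ab', h0'.trans hu', hm'.trans hw', hc',
      fun i j hij hjm => hmono (hij.trans hjm) hjm hij⟩

theorem stmt11 (n k : ℤ) (hk : 1 ≤ k) (hkn : k < n)
    (u w w0 : Equiv.Perm ℤ) (hu : InS 1 n u) (hw : InS 1 n w)
    (hw0a : ∀ i : ℤ, 1 ≤ i → i ≤ n → w0 i = n + 1 - i)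
    (hw0b : ∀ i : ℤ, i < 1 ∨ n < i → w0 i = i) :
    IncTo k u w ↔ DistinctLeftTo (n - k) (w * w0) (u * w0) :=
  stmt11_general n k u w w0 hu hw hw0a hw0b
end

section
/- Let u, w ∈ P_r ⊆ S_{[a,n]} (i.e., u(p_j) = w(p_j) = j for all j ∈ (r,n], where p_{r+1} < ⋯ < p_n are fixed integers with a ≤ p_{r+1} and p_n ≤ n), and let k ∈ [a, p_{r+1} - 1]. Then u →^k w if and only if ι_r(u) →^k ι_r(w), where ι_r deletes the values r+1, …, n from the one-line notation; and in this case fix_{(k,n]}(u,w) = fix_{(k,r]}(ι_r(u), ι_r(w)) ∪ [r+1, n], where fix_I(u,w) = {u(t) : t ∈ I, u(t) = w(t)}. -/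
/-- `v = ι_r(w)`: deletion of the values `r+1, …, n` from the one-line
notation of `w`. -/
def Iota (a r n : ℤ) (p : ℤ → ℤ) (w v : Equiv.Perm ℤ) : Prop :=
  ∃ φ : ℤ → ℤ, StrictMonoOn φ (Set.Icc a r) ∧
    φ '' Set.Icc a r = Set.Icc a n \ {x : ℤ | ∃ j : ℤ, r < j ∧ j ≤ n ∧ p j = x} ∧
    ∀ i ∈ Set.Icc a r, v i = w (φ i)

namespace S17

def Inv (x : Equiv.Perm ℤ) : Set (ℤ × ℤ) := {q | q.1 < q.2 ∧ x q.2 < x q.1}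

lemma permLength_def (x : Equiv.Perm ℤ) : permLength x = (Inv x).ncard := rfl

lemma InS_maps {a n : ℤ} {x : Equiv.Perm ℤ} (h : InS a n x) {t : ℤ}
    (h1 : a ≤ t) (h2 : t ≤ n) : a ≤ x t ∧ x t ≤ n := by
  by_contra hc
  have h3 : x (x t) = x t := by
    by_contra h3
    exact hc (h _ h3)
  have h4 : x t = t := x.injective h3
  rw [h4] at hc; exact hc ⟨h1, h2⟩

lemma Inv_subset {a n : ℤ} {x : Equiv.Perm ℤ} (h : InS a n x) :
    Inv x ⊆ Set.Icc a n ×ˢ Set.Icc a n := by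
  rintro ⟨s, t⟩ ⟨hst, hinv⟩
  simp only [Set.mem_prod, Set.mem_Icc]
  by_cases hs : a ≤ s ∧ s ≤ n
  · refine ⟨hs, ?_⟩
    by_cases ht : a ≤ t ∧ t ≤ n
    · exact ht
    · exfalso
      have hxt : x t = t := by
        by_contra h3; exact ht (h _ h3)
      have := (InS_maps h hs.1 hs.2).2
      simp only at hinv
      omega
  · exfalso
    have hxs : x s = s := by
      by_contra h3; exact hs (h _ h3)
    simp only at hinv
    rcases lt_or_ge s a with hsa | hsa
    · by_cases ht : a ≤ t ∧ t ≤ n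
      · have := (InS_maps h ht.1 ht.2).1; omega
      · have hxt : x t = t := by by_contra h3; exact ht (h _ h3)
        omega
    · -- s > n
      have hsn : n < s := by omega
      have htn : n < t := by omega
      have hxt : x t = t := by
        by_contra h3; have := (h _ h3).2; omega
      omega

lemma Inv_finite {a n : ℤ} {x : Equiv.Perm ℤ} (h : InS a n x) : (Inv x).Finite :=
  Set.Finite.subset ((Set.finite_Icc a n).prod (Set.finite_Icc a n)) (Inv_subset h)

lemma finSupp_exists_InS {x : Equiv.Perm ℤ} (h : {i : ℤ | x i ≠ i}.Finite) :
    ∃ a n : ℤ, InS a n x := by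
  obtain ⟨n, hn⟩ := h.bddAbove
  obtain ⟨a, ha⟩ := h.bddBelow
  exact ⟨a, n, fun i hi => ⟨ha hi, hn hi⟩⟩

lemma Inv_finite_of_finSupp {x : Equiv.Perm ℤ} (h : {i : ℤ | x i ≠ i}.Finite) :
    (Inv x).Finite := by
  obtain ⟨a, n, h'⟩ := finSupp_exists_InS h
  exact Inv_finite h'

lemma finSupp_of_InS {a n : ℤ} {x : Equiv.Perm ℤ} (h : InS a n x) :
    {i : ℤ | x i ≠ i}.Finite :=
  Set.Finite.subset (Set.finite_Icc a n) (fun i hi => Set.mem_Icc.2 (h i hi))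

lemma finSupp_mul_swap {x : Equiv.Perm ℤ} (h : {i : ℤ | x i ≠ i}.Finite) (i j : ℤ) :
    {t : ℤ | (x * Equiv.swap i j) t ≠ t}.Finite := by
  apply Set.Finite.subset (h.union ((Set.finite_singleton i).union (Set.finite_singleton j)))
  intro t ht
  simp only [Set.mem_setOf_eq, Equiv.Perm.mul_apply] at ht
  by_cases h1 : t = i
  · simp [h1]
  by_cases h2 : t = j
  · simp [h2]
  · left
    rw [Equiv.swap_apply_of_ne_of_ne h1 h2] at ht
    exact ht


lemma succ_le_card_swap {x : Equiv.Perm ℤ} {i j : ℤ} (hij : i < j) (hx : x i < x j)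
    (hfin : (Inv (x * Equiv.swap i j)).Finite) :
    (Inv x).ncard + 1 ≤ (Inv (x * Equiv.swap i j)).ncard := by
  set y := x * Equiv.swap i j with hy
  have hyi : y i = x j := by simp [hy, Equiv.Perm.mul_apply]
  have hyj : y j = x i := by simp [hy, Equiv.Perm.mul_apply]
  have hyo : ∀ t, t ≠ i → t ≠ j → y t = x t := by
    intro t h1 h2
    simp [hy, Equiv.Perm.mul_apply, Equiv.swap_apply_of_ne_of_ne h1 h2]
  have hxinj : ∀ s t : ℤ, x s = x t → s = t := fun s t h => x.injective h
  classical
  set F : ℤ × ℤ → ℤ × ℤ := fun q =>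
    (if q.1 = j ∧ x i < x q.2 then i else q.1,
     if q.2 = i ∧ x q.1 < x j then j else q.2) with hF
  set G : ℤ × ℤ → ℤ × ℤ := fun q =>
    (if q.1 = i ∧ x i < x q.2 ∧ q.2 ≠ j then j else q.1,
     if q.2 = j ∧ x q.1 < x j ∧ q.1 ≠ i then i else q.2) with hG
  have hFeval : ∀ s t : ℤ, F (s, t) =
      (if s = j ∧ x i < x t then i else s, if t = i ∧ x s < x j then j else t) := fun _ _ => rfl
  have hGeval : ∀ s t : ℤ, G (s, t) =
      (if s = i ∧ x i < x t ∧ t ≠ j then j else s,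
       if t = j ∧ x s < x j ∧ s ≠ i then i else t) := fun _ _ => rfl
  set A : Set (ℤ × ℤ) := insert (i, j) (Inv x) with hA
  have hmaps : ∀ q ∈ A, F q ∈ Inv y := by
    rintro ⟨s, t⟩ hq
    rcases hq with heq | ⟨hst, hinv⟩
    · -- q = (i, j)
      have hs : s = i := (Prod.mk.injEq .. ▸ heq).1
      have ht : t = j := (Prod.mk.injEq .. ▸ heq).2
      rw [hFeval, if_neg (by omega), if_neg (by omega)]
      exact ⟨by omega, by rw [ht, hs, hyi, hyj]; linarith⟩
    · simp only at hst hinv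
      by_cases c1 : s = j ∧ x i < x t
      · have hti : t ≠ i := by omega
        have htj : t ≠ j := by omega
        rw [hFeval, if_pos c1, if_neg (by omega)]
        have h1 : y t = x t := hyo t hti htj
        have hxs : x s = x j := by rw [c1.1]
        exact ⟨by omega, by rw [h1, hyi]; linarith⟩
      · by_cases c2 : t = i ∧ x s < x j
        · have hsi : s ≠ i := by omega
          have hsj : s ≠ j := by omega
          rw [hFeval, if_neg (by omega), if_pos c2]
          have h1 : y s = x s := hyo s hsi hsj
          have h2 : x t = x i := by rw [c2.1]
          exact ⟨by omega, by rw [h1, hyj]; linarith⟩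
        · rw [hFeval, if_neg c1, if_neg c2]
          refine ⟨hst, ?_⟩
          by_cases hsi : s = i
          · have htj : t ≠ j := by
              intro h
              have : x t = x j := by rw [h]
              have : x s = x i := by rw [hsi]
              linarith
            have hti : t ≠ i := by omega
            have h1 : y t = x t := hyo t hti htj
            have h2 : x s = x i := by rw [hsi]
            rw [h1, hsi, hyi]; linarith
          · by_cases hsj : s = j
            · have hti : t ≠ i := by omega
              have htj : t ≠ j := by omega
              have hxti : x t < x i := by
                rcases lt_trichotomy (x t) (x i) with h | h | h
                · exact h
                · exact absurd (hxinj _ _ h) hti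
                · exact absurd ⟨hsj, h⟩ c1
              have h1 : y t = x t := hyo t hti htj
              rw [h1, hsj, hyj]; linarith
            · by_cases hti : t = i
              · have hxjs : x j < x s := by
                  rcases lt_trichotomy (x s) (x j) with h | h | h
                  · exact absurd ⟨hti, h⟩ c2
                  · exact absurd (hxinj _ _ h) hsj
                  · exact h
                have h1 : y s = x s := hyo s hsi hsj
                rw [h1, hti, hyi]; linarith
              · by_cases htj : t = j
                · have h1 : y s = x s := hyo s hsi hsj
                  have h2 : x t = x j := by rw [htj]
                  rw [h1, htj, hyj]; linarith
                · rw [hyo s hsi hsj, hyo t hti htj]; linarith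
  have hGF : ∀ q ∈ A, G ((F q).1, (F q).2) = q := by
    rintro ⟨s, t⟩ hq
    rcases hq with heq | ⟨hst, hinv⟩
    · have hs : s = i := (Prod.mk.injEq .. ▸ heq).1
      have ht : t = j := (Prod.mk.injEq .. ▸ heq).2
      rw [hFeval, if_neg (by omega), if_neg (by omega), hGeval,
          if_neg (by rintro ⟨-, -, h⟩; exact h ht), if_neg (by rintro ⟨-, -, h⟩; omega)]
    · simp only at hst hinv
      by_cases c1 : s = j ∧ x i < x t
      · have hti : t ≠ i := by omega
        have htj : t ≠ j := by omega
        rw [hFeval, if_pos c1, if_neg (by omega), hGeval,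
            if_pos ⟨rfl, c1.2, htj⟩, if_neg (by rintro ⟨h, -, -⟩; exact htj h)]
        rw [c1.1]
      · by_cases c2 : t = i ∧ x s < x j
        · have hsi : s ≠ i := by omega
          have hsj : s ≠ j := by omega
          rw [hFeval, if_neg (by omega), if_pos c2, hGeval,
              if_neg (by rintro ⟨h, -, -⟩; exact hsi h), if_pos ⟨rfl, c2.2, hsi⟩]
          rw [c2.1]
        · rw [hFeval, if_neg c1, if_neg c2, hGeval,
              if_neg ?_, if_neg ?_]
          · rintro ⟨h1, h2, -⟩
            simp only at h1 h2
            have : x t = x j := by rw [h1]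
            linarith
          · rintro ⟨h1, h2, -⟩
            simp only at h1 h2
            have : x s = x i := by rw [h1]
            linarith
  have hGF' : ∀ q ∈ A, G (F q) = q := by
    intro q hq
    have := hGF q hq
    simpa using this
  have hinjOn : Set.InjOn F A := by
    intro q hq q' hq' h
    rw [← hGF' q hq, ← hGF' q' hq', h]
  have hAfin : A.Finite := by
    have himg : F '' A ⊆ Inv y := by
      rintro _ ⟨q, hq, rfl⟩; exact hmaps q hq
    exact Set.Finite.of_finite_image (hfin.subset himg) hinjOn
  have hij_not : (i, j) ∉ Inv x := by
    rintro ⟨-, h2⟩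
    simp only at h2
    linarith
  calc (Inv x).ncard + 1
      = A.ncard := by
        rw [hA, Set.ncard_insert_of_notMem hij_not (hAfin.subset (Set.subset_insert _ _))]
    _ = (F '' A).ncard := (Set.ncard_image_of_injOn hinjOn).symm
    _ ≤ (Inv y).ncard := Set.ncard_le_ncard (by rintro _ ⟨q, hq, rfl⟩; exact hmaps q hq) hfin

lemma lt_of_len_succ {x : Equiv.Perm ℤ} {i j : ℤ} (hij : i < j)
    (hfx : (Inv x).Finite) (hfy : (Inv (x * Equiv.swap i j)).Finite)
    (hlen : (Inv (x * Equiv.swap i j)).ncard = (Inv x).ncard + 1) : x i < x j := by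
  rcases lt_trichotomy (x i) (x j) with h | h | h
  · exact h
  · exact absurd (x.injective h) (ne_of_lt hij)
  · exfalso
    set y := x * Equiv.swap i j with hy
    have hyx : y * Equiv.swap i j = x := by
      rw [hy, mul_assoc, Equiv.swap_mul_self, mul_one]
    have hyi : y i = x j := by simp [hy, Equiv.Perm.mul_apply]
    have hyj : y j = x i := by simp [hy, Equiv.Perm.mul_apply]
    have h2 : (Inv y).ncard + 1 ≤ (Inv (y * Equiv.swap i j)).ncard := by
      refine succ_le_card_swap hij (by rw [hyi, hyj]; exact h) ?_
      rw [hyx]; exact hfx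
    rw [hyx] at h2
    omega

lemma strictMonoOn_int_gap {lo hi : ℤ} {f : ℤ → ℤ} (hf : StrictMonoOn f (Set.Icc lo hi)) :
    ∀ s t : ℤ, lo ≤ s → s ≤ t → t ≤ hi → t - s ≤ f t - f s := by
  have key : ∀ d : ℕ, ∀ s t : ℤ, lo ≤ s → s ≤ t → t ≤ hi → t - s ≤ d → t - s ≤ f t - f s := by
    intro d
    induction d with
    | zero => intro s t h1 h2 h3 h4
              have hst : s = t := by omega
              subst hst
              omega
    | succ d IH =>
      intro s t h1 h2 h3 h4
      by_cases h5 : (t - s : ℤ) ≤ d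
      · exact IH s t h1 h2 h3 h5
      · have h6 : s ≤ t - 1 := by omega
        have h7 : t - 1 - s ≤ f (t-1) - f s := IH s (t-1) h1 h6 (by omega) (by omega)
        have h8 : f (t-1) < f t := hf (Set.mem_Icc.2 ⟨by omega, by omega⟩) (Set.mem_Icc.2 ⟨by omega, h3⟩) (by omega)
        omega
  intro s t h1 h2 h3
  exact key (t - s).toNat s t h1 h2 h3 (by omega)

lemma strictMonoOn_eq_of_image_eq {a r : ℤ} {f g : ℤ → ℤ}
    (hf : StrictMonoOn f (Set.Icc a r)) (hg : StrictMonoOn g (Set.Icc a r))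
    (him : f '' Set.Icc a r = g '' Set.Icc a r) :
    ∀ t ∈ Set.Icc a r, f t = g t := by
  have key : ∀ d : ℕ, ∀ (f g : ℤ → ℤ), StrictMonoOn f (Set.Icc a r) → StrictMonoOn g (Set.Icc a r) →
      f '' Set.Icc a r = g '' Set.Icc a r →
      ∀ t, a ≤ t → t ≤ r → t - a ≤ d → ¬ (f t < g t) := by
    intro d
    induction d with
    | zero =>
      intro f g hf hg him t h1 h2 h3 hlt
      -- t = a ; f a < g a, but f a ∈ image g, f a = g s, g s < g a ⇒ s < a contra
      have ht : t = a := by omega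
      have hmem : f t ∈ g '' Set.Icc a r := by
        rw [← him]; exact ⟨t, Set.mem_Icc.2 ⟨h1, h2⟩, rfl⟩
      obtain ⟨s, hs, hgs⟩ := hmem
      have : g s < g t := by omega
      have hst : s < t := by
        by_contra hc
        have := hg.monotoneOn (Set.mem_Icc.2 ⟨h1, h2⟩) hs (by omega)
        omega
      rw [Set.mem_Icc] at hs
      omega
    | succ d IH =>
      intro f g hf hg him t h1 h2 h3 hlt
      by_cases h4 : (t - a : ℤ) ≤ d
      · exact IH f g hf hg him t h1 h2 h4 hlt
      · have hmem : f t ∈ g '' Set.Icc a r := by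
          rw [← him]; exact ⟨t, Set.mem_Icc.2 ⟨h1, h2⟩, rfl⟩
        obtain ⟨s, hs, hgs⟩ := hmem
        have hgst : g s < g t := by omega
        have hst : s < t := by
          by_contra hc
          have := hg.monotoneOn (Set.mem_Icc.2 ⟨h1, h2⟩) hs (by omega)
          omega
        rw [Set.mem_Icc] at hs
        have heq : f s = g s := by
          have n1 := IH f g hf hg him s hs.1 hs.2 (by omega)
          have n2 := IH g f hg hf him.symm s hs.1 hs.2 (by omega)
          omega
        have : f s < f t := hf (Set.mem_Icc.2 hs) (Set.mem_Icc.2 ⟨h1, h2⟩) hst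
        omega
  intro t ht
  rw [Set.mem_Icc] at ht
  have n1 := key (t - a).toNat f g hf hg him t ht.1 ht.2 (by omega)
  have n2 := key (t - a).toNat g f hg hf him.symm t ht.1 ht.2 (by omega)
  omega

structure Ctx where
  a : ℤ
  n : ℤ
  r : ℤ
  k : ℤ
  p : ℤ → ℤ
  φ : ℤ → ℤ
  ha : a ≤ 0
  hr : 0 ≤ r
  hrn : r ≤ n
  hp : StrictMonoOn p (Set.Icc (r + 1) n)
  hpa : a ≤ p (r + 1)
  hpn : p n ≤ n
  hk : a ≤ k
  hk2 : k ≤ p (r + 1) - 1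
  hφmono : StrictMonoOn φ (Set.Icc a r)
  hφim : φ '' Set.Icc a r = Set.Icc a n \ {x : ℤ | ∃ j : ℤ, r < j ∧ j ≤ n ∧ p j = x}

namespace Ctx

variable (C : Ctx)

def Pset : Set ℤ := {x : ℤ | ∃ j : ℤ, C.r < j ∧ j ≤ C.n ∧ C.p j = x}
def Sset : Set ℤ := Set.Icc C.a C.n \ C.Pset
def Good (x : Equiv.Perm ℤ) : Prop :=
  InS C.a C.n x ∧ ∀ j : ℤ, C.r < j → j ≤ C.n → x (C.p j) = j
def Comp (x X : Equiv.Perm ℤ) : Prop :=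
  InS C.a C.r X ∧ ∀ t : ℤ, C.a ≤ t → t ≤ C.r → X t = x (C.φ t)
def Cset : Set (ℤ × ℤ) := {q : ℤ × ℤ | q.1 ∈ C.Pset ∧ q.2 ∈ C.Sset ∧ q.1 < q.2}

lemma him' : C.φ '' Set.Icc C.a C.r = C.Sset := C.hφim

lemma p_mem_Icc {j : ℤ} (h1 : C.r < j) (h2 : j ≤ C.n) : C.a ≤ C.p j ∧ C.p j ≤ C.n := by
  have hmono := C.hp.monotoneOn
  have h3 : C.p (C.r+1) ≤ C.p j :=
    hmono (Set.mem_Icc.2 ⟨le_refl _, by omega⟩) (Set.mem_Icc.2 ⟨by omega, h2⟩) (by omega)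
  have h4 : C.p j ≤ C.p C.n :=
    hmono (Set.mem_Icc.2 ⟨by omega, h2⟩) (Set.mem_Icc.2 ⟨by omega, le_refl _⟩) h2
  have := C.hpa
  have := C.hpn
  constructor <;> omega

lemma k_lt_p {j : ℤ} (h1 : C.r < j) (h2 : j ≤ C.n) : C.k < C.p j := by
  have hmono := C.hp.monotoneOn
  have h3 : C.p (C.r+1) ≤ C.p j :=
    hmono (Set.mem_Icc.2 ⟨le_refl _, by omega⟩) (Set.mem_Icc.2 ⟨by omega, h2⟩) (by omega)
  have := C.hk2
  omega

lemma Pset_gt_k {s : ℤ} (h : s ∈ C.Pset) : C.k < s := by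
  obtain ⟨j, h1, h2, rfl⟩ := h
  exact C.k_lt_p h1 h2

lemma Pset_mem_Icc {s : ℤ} (h : s ∈ C.Pset) : C.a ≤ s ∧ s ≤ C.n := by
  obtain ⟨j, h1, h2, rfl⟩ := h
  exact C.p_mem_Icc h1 h2

lemma initseg {s : ℤ} (h1 : C.a ≤ s) (h2 : s ≤ C.r) (h3 : s ≤ C.k) : s ∈ C.Sset := by
  refine ⟨Set.mem_Icc.2 ⟨h1, by have := C.hrn; omega⟩, fun hs => ?_⟩
  have := C.Pset_gt_k hs
  omega

lemma phi_mem {t : ℤ} (h1 : C.a ≤ t) (h2 : t ≤ C.r) : C.φ t ∈ C.Sset := by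
  rw [← C.him']
  exact ⟨t, Set.mem_Icc.2 ⟨h1, h2⟩, rfl⟩

lemma phi_surj {s : ℤ} (h : s ∈ C.Sset) : ∃ t, (C.a ≤ t ∧ t ≤ C.r) ∧ C.φ t = s := by
  rw [← C.him'] at h
  obtain ⟨t, ht, h2⟩ := h
  exact ⟨t, Set.mem_Icc.1 ht, h2⟩

lemma phi_id : ∀ t : ℤ, C.a ≤ t → t ≤ C.r → t ≤ C.k → C.φ t = t := by
  have key : ∀ d : ℕ, ∀ t : ℤ, C.a ≤ t → t ≤ C.r → t ≤ C.k → t - C.a ≤ d → C.φ t = t := by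
    intro d
    induction d with
    | zero =>
      intro t h1 h2 h3 h4
      have ht : t = C.a := by omega
      have h5 := C.phi_mem h1 h2
      have h6 : C.a ≤ C.φ t := (Set.mem_Icc.1 h5.1).1
      by_contra hne
      have h7 : t < C.φ t := by omega
      obtain ⟨s, hs, hφs⟩ := C.phi_surj (C.initseg h1 h2 h3)
      rcases lt_trichotomy s t with h8 | h8 | h8
      · omega
      · rw [h8] at hφs; exact hne hφs
      · have := C.hφmono (Set.mem_Icc.2 ⟨h1, h2⟩) (Set.mem_Icc.2 ⟨by omega, hs.2⟩) h8
        omega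
    | succ d IH =>
      intro t h1 h2 h3 h4
      by_cases h5 : (t - C.a : ℤ) ≤ d
      · exact IH t h1 h2 h3 h5
      · have ht : C.a ≤ t - 1 := by omega
        have hIH : C.φ (t - 1) = t - 1 := IH (t-1) ht (by omega) (by omega) (by omega)
        have hlt : C.φ (t-1) < C.φ t :=
          C.hφmono (Set.mem_Icc.2 ⟨ht, by omega⟩) (Set.mem_Icc.2 ⟨h1, h2⟩) (by omega)
        have hge : t ≤ C.φ t := by omega
        by_contra hne
        have h7 : t < C.φ t := by omega
        obtain ⟨s, hs, hφs⟩ := C.phi_surj (C.initseg h1 h2 h3)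
        rcases lt_trichotomy s t with h8 | h8 | h8
        · have : C.φ s ≤ C.φ (t-1) :=
            C.hφmono.monotoneOn (Set.mem_Icc.2 ⟨hs.1, hs.2⟩) (Set.mem_Icc.2 ⟨ht, by omega⟩) (by omega)
          omega
        · rw [h8] at hφs; exact hne hφs
        · have := C.hφmono (Set.mem_Icc.2 ⟨h1, h2⟩) (Set.mem_Icc.2 ⟨by omega, hs.2⟩) h8
          omega
  intro t h1 h2 h3
  exact key (t - C.a).toNat t h1 h2 h3 (by omega)

lemma phi_gt_k {t : ℤ} (h1 : C.a ≤ t) (h2 : t ≤ C.r) (h3 : C.k < t) : C.k < C.φ t := by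
  have h4 : C.a ≤ C.k := C.hk
  have h5 : C.φ C.k = C.k := C.phi_id C.k h4 (by omega) (le_refl _)
  have := C.hφmono (Set.mem_Icc.2 ⟨h4, by omega⟩) (Set.mem_Icc.2 ⟨h1, h2⟩) h3
  omega

lemma good_maps_Sset {x : Equiv.Perm ℤ} (hx : C.Good x) {t : ℤ} (h : t ∈ C.Sset) :
    C.a ≤ x t ∧ x t ≤ C.r := by
  obtain ⟨ht, htP⟩ := h
  rw [Set.mem_Icc] at ht
  have h1 := InS_maps hx.1 ht.1 ht.2
  refine ⟨h1.1, ?_⟩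
  by_contra hc
  push_neg at hc
  have h2 : x (C.p (x t)) = x t := hx.2 (x t) hc h1.2
  have h3 : C.p (x t) = t := x.injective h2
  exact htP ⟨x t, hc, h1.2, h3⟩

/-- The key length decomposition: `Inv x = φ×φ '' Inv X ∪ Cset`. -/
lemma inv_decomp {x X : Equiv.Perm ℤ} (hx : C.Good x) (hC : C.Comp x X) :
    Inv x = (fun q : ℤ × ℤ => (C.φ q.1, C.φ q.2)) '' Inv X ∪ C.Cset := by
  apply Set.Subset.antisymm
  · rintro ⟨s, t⟩ ⟨hst, hinv⟩
    simp only at hst hinv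
    have hsub := Inv_subset hx.1 (a := C.a) (n := C.n) (show (s, t) ∈ Inv x from ⟨hst, hinv⟩)
    simp only [Set.mem_prod, Set.mem_Icc] at hsub
    by_cases hsP : s ∈ C.Pset
    · by_cases htP : t ∈ C.Pset
      · exfalso
        obtain ⟨i', hi1, hi2, rfl⟩ := hsP
        obtain ⟨j', hj1, hj2, rfl⟩ := htP
        have hxs : x (C.p i') = i' := hx.2 i' hi1 hi2
        have hxt : x (C.p j') = j' := hx.2 j' hj1 hj2
        have : j' < i' := by omega
        have := C.hp (Set.mem_Icc.2 ⟨by omega, hj2⟩) (Set.mem_Icc.2 ⟨by omega, hi2⟩) this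
        omega
      · exact Or.inr ⟨hsP, ⟨Set.mem_Icc.2 hsub.2, htP⟩, hst⟩
    · by_cases htP : t ∈ C.Pset
      · exfalso
        obtain ⟨j', hj1, hj2, rfl⟩ := htP
        have hxt : x (C.p j') = j' := hx.2 j' hj1 hj2
        have := (C.good_maps_Sset hx ⟨Set.mem_Icc.2 hsub.1, hsP⟩).2
        omega
      · left
        obtain ⟨s', hs', hφs⟩ := C.phi_surj ⟨Set.mem_Icc.2 hsub.1, hsP⟩
        obtain ⟨t', ht', hφt⟩ := C.phi_surj ⟨Set.mem_Icc.2 hsub.2, htP⟩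
        refine ⟨(s', t'), ⟨?_, ?_⟩, by simp [hφs, hφt]⟩
        · -- s' < t'
          simp only
          by_contra hc
          have := C.hφmono.monotoneOn (Set.mem_Icc.2 ht') (Set.mem_Icc.2 hs') (by omega)
          omega
        · simp only
          rw [hC.2 s' hs'.1 hs'.2, hC.2 t' ht'.1 ht'.2, hφs, hφt]
          exact hinv
  · rintro ⟨s, t⟩ (⟨⟨s', t'⟩, ⟨hst', hinv'⟩, heq⟩ | ⟨h1, h2, h3⟩)
    · simp only at hst' hinv'
      have hmem : (s', t') ∈ Inv X := ⟨hst', hinv'⟩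
      have hs' := Set.mem_Icc.1 ((Inv_subset hC.1 hmem).1)
      have ht' := Set.mem_Icc.1 ((Inv_subset hC.1 hmem).2)
      have hs : s = C.φ s' := by simpa using (congrArg Prod.fst heq).symm
      have ht : t = C.φ t' := by simpa using (congrArg Prod.snd heq).symm
      constructor
      · simp only [hs, ht]
        exact C.hφmono (Set.mem_Icc.2 hs') (Set.mem_Icc.2 ht') hst'
      · simp only [hs, ht]
        rw [← hC.2 s' hs'.1 hs'.2, ← hC.2 t' ht'.1 ht'.2]
        exact hinv'
    · -- Cset
      obtain ⟨j', hj1, hj2, hpj⟩ := h1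
      have hpj' : C.p j' = s := hpj
      have h2' : t ∈ C.Sset := h2
      have h3' : s < t := h3
      refine ⟨h3', ?_⟩
      show x t < x s
      have hxs : x s = j' := by rw [← hpj']; exact hx.2 j' hj1 hj2
      have := (C.good_maps_Sset hx h2').2
      omega

lemma Cset_finite : C.Cset.Finite := by
  apply Set.Finite.subset ((Set.finite_Icc C.a C.n).prod (Set.finite_Icc C.a C.n))
  rintro ⟨s, t⟩ ⟨h1, h2, h3⟩
  exact ⟨Set.mem_Icc.2 (C.Pset_mem_Icc h1), h2.1⟩

lemma len_decomp {x X : Equiv.Perm ℤ} (hx : C.Good x) (hC : C.Comp x X) :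
    permLength x = permLength X + C.Cset.ncard := by
  rw [permLength_def, permLength_def, C.inv_decomp hx hC]
  have hfinX : (Inv X).Finite := Inv_finite hC.1
  have hinj : Set.InjOn (fun q : ℤ × ℤ => (C.φ q.1, C.φ q.2)) (Inv X) := by
    rintro ⟨s, t⟩ hq ⟨s', t'⟩ hq' h
    have hs := Set.mem_Icc.1 ((Inv_subset hC.1 hq).1)
    have ht := Set.mem_Icc.1 ((Inv_subset hC.1 hq).2)
    have hs' := Set.mem_Icc.1 ((Inv_subset hC.1 hq').1)
    have ht' := Set.mem_Icc.1 ((Inv_subset hC.1 hq').2)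
    have h1 : C.φ s = C.φ s' := by simpa using congrArg Prod.fst h
    have h2 : C.φ t = C.φ t' := by simpa using congrArg Prod.snd h
    have e1 := C.hφmono.injOn (Set.mem_Icc.2 hs) (Set.mem_Icc.2 hs') h1
    have e2 := C.hφmono.injOn (Set.mem_Icc.2 ht) (Set.mem_Icc.2 ht') h2
    exact Prod.ext e1 e2
  have hdisj : Disjoint ((fun q : ℤ × ℤ => (C.φ q.1, C.φ q.2)) '' Inv X) C.Cset := by
    rw [Set.disjoint_left]
    rintro ⟨s, t⟩ ⟨⟨s', t'⟩, hq', heq⟩ ⟨h1, -, -⟩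
    have hs' := Set.mem_Icc.1 ((Inv_subset hC.1 hq').1)
    have hs : s = C.φ s' := by simpa using (congrArg Prod.fst heq).symm
    have : s ∈ C.Sset := hs ▸ C.phi_mem hs'.1 hs'.2
    exact this.2 h1
  rw [Set.ncard_union_eq hdisj (hfinX.image _) C.Cset_finite, Set.ncard_image_of_injOn hinj]

/-- Transfer of a cover step across deletion. -/
lemma corr {x X : Equiv.Perm ℤ} (hx : C.Good x) (hC : C.Comp x X)
    {a₁ b₁' : ℤ} (h1 : C.a ≤ a₁) (h2 : a₁ ≤ C.k) (h3 : a₁ ≤ C.r)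
    (h4 : C.k < b₁') (h5 : b₁' ≤ C.r) :
    C.Good (x * Equiv.swap a₁ (C.φ b₁')) ∧
    C.Comp (x * Equiv.swap a₁ (C.φ b₁')) (X * Equiv.swap a₁ b₁') ∧
    (permLength (x * Equiv.swap a₁ (C.φ b₁')) = permLength x + 1 ↔
      permLength (X * Equiv.swap a₁ b₁') = permLength X + 1) := by
  have hab : C.a ≤ b₁' := by have := C.hk; omega
  have hb₁S : C.φ b₁' ∈ C.Sset := C.phi_mem hab h5
  have hb₁Icc := Set.mem_Icc.1 hb₁S.1
  have hφa₁ : C.φ a₁ = a₁ := C.phi_id a₁ h1 h3 h2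
  have hkb₁ : C.k < C.φ b₁' := C.phi_gt_k hab h5 h4
  have hswap_out : ∀ t : ℤ, t ≠ a₁ → t ≠ C.φ b₁' → Equiv.swap a₁ (C.φ b₁') t = t :=
    fun t ha hb => Equiv.swap_apply_of_ne_of_ne ha hb
  have hswap_out' : ∀ t : ℤ, t ≠ a₁ → t ≠ b₁' → Equiv.swap a₁ b₁' t = t :=
    fun t ha hb => Equiv.swap_apply_of_ne_of_ne ha hb
  have hrn := C.hrn
  have hGood : C.Good (x * Equiv.swap a₁ (C.φ b₁')) := by
    constructor
    · intro t ht
      by_contra hc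
      apply ht
      have htne1 : t ≠ a₁ := by rintro rfl; exact hc ⟨h1, by omega⟩
      have htne2 : t ≠ C.φ b₁' := by rintro rfl; exact hc ⟨hb₁Icc.1, hb₁Icc.2⟩
      rw [Equiv.Perm.mul_apply, hswap_out t htne1 htne2]
      by_contra hxt
      exact hc (hx.1 t hxt)
    · intro j hj1 hj2
      rw [Equiv.Perm.mul_apply, hswap_out _ ?_ ?_]
      · exact hx.2 j hj1 hj2
      · have := C.k_lt_p hj1 hj2; omega
      · intro hc
        exact hb₁S.2 ⟨j, hj1, hj2, hc ▸ rfl⟩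
  have hComp : C.Comp (x * Equiv.swap a₁ (C.φ b₁')) (X * Equiv.swap a₁ b₁') := by
    constructor
    · intro t ht
      by_contra hc
      have htne1 : t ≠ a₁ := by rintro rfl; exact hc ⟨h1, h3⟩
      have htne2 : t ≠ b₁' := by rintro rfl; exact hc ⟨hab, h5⟩
      rw [Equiv.Perm.mul_apply, hswap_out' t htne1 htne2] at ht
      exact hc (hC.1 t ht)
    · intro t ht1 ht2
      rw [Equiv.Perm.mul_apply, Equiv.Perm.mul_apply]
      by_cases hta : t = a₁
      · rw [hta, Equiv.swap_apply_left, hφa₁, Equiv.swap_apply_left]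
        exact hC.2 b₁' hab h5
      · by_cases htb : t = b₁'
        · rw [htb, Equiv.swap_apply_right, Equiv.swap_apply_right, hC.2 a₁ h1 h3, hφa₁]
        · rw [hswap_out' t hta htb, hswap_out (C.φ t) ?_ ?_]
          · exact hC.2 t ht1 ht2
          · rw [← hφa₁]
            intro hc
            exact hta (C.hφmono.injOn (Set.mem_Icc.2 ⟨ht1, ht2⟩) (Set.mem_Icc.2 ⟨h1, h3⟩) hc)
          · intro hc
            exact htb (C.hφmono.injOn (Set.mem_Icc.2 ⟨ht1, ht2⟩) (Set.mem_Icc.2 ⟨hab, h5⟩) hc)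
  refine ⟨hGood, hComp, ?_⟩
  have e1 := C.len_decomp hx hC
  have e2 := C.len_decomp hGood hComp
  omega

/-- Two companions of the same permutation agree. -/
lemma comp_unique {x X X' : Equiv.Perm ℤ} (h1 : C.Comp x X) (h2 : C.Comp x X') : X = X' := by
  apply Equiv.ext
  intro t
  by_cases ht : C.a ≤ t ∧ t ≤ C.r
  · rw [h1.2 t ht.1 ht.2, h2.2 t ht.1 ht.2]
  · have e1 : X t = t := by by_contra hc; exact ht (h1.1 t hc)
    have e2 : X' t = t := by by_contra hc; exact ht (h2.1 t hc)
    rw [e1, e2]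

/-- Two good permutations with the same companion agree. -/
lemma good_unique {x x' X : Equiv.Perm ℤ} (hx : C.Good x) (hx' : C.Good x')
    (h1 : C.Comp x X) (h2 : C.Comp x' X) : x = x' := by
  apply Equiv.ext
  intro t
  by_cases ht : C.a ≤ t ∧ t ≤ C.n
  · by_cases htP : t ∈ C.Pset
    · obtain ⟨j, hj1, hj2, rfl⟩ := htP
      rw [hx.2 j hj1 hj2, hx'.2 j hj1 hj2]
    · obtain ⟨s, hs, hφs⟩ := C.phi_surj ⟨Set.mem_Icc.2 ht, htP⟩
      rw [← hφs, ← h1.2 s hs.1 hs.2, ← h2.2 s hs.1 hs.2]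
  · have e1 : x t = t := by by_contra hc; exact ht (hx.1 t hc)
    have e2 : x' t = t := by by_contra hc; exact ht (hx'.1 t hc)
    rw [e1, e2]

lemma a_le_r (C : Ctx) : C.a ≤ C.r := by have := C.ha; have := C.hr; omega

lemma k_le_r_of_lt (C : Ctx) (h : C.r < C.n) : C.k ≤ C.r := by
  have hgap := strictMonoOn_int_gap C.hp (C.r+1) C.n (le_refl _) (by omega) (le_refl _)
  have := C.hpn
  have := C.hk2
  omega

section Chains
variable {u w vu vw : Equiv.Perm ℤ}

/-- Forward direction: a chain upstairs projects to a chain downstairs. -/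
lemma incTo_transfer (hGu : C.Good u) (hGw : C.Good w)
    (hCu : C.Comp u vu) (hCw : C.Comp w vw) (h : IncTo C.k u w) : IncTo C.k vu vw := by
  classical
  obtain ⟨m, us, ab, h0, hm, hstep, hinc⟩ := h
  have hFS : ∀ i, i ≤ m → {t : ℤ | us i t ≠ t}.Finite := by
    intro i
    induction i with
    | zero => intro _; rw [h0]; exact finSupp_of_InS hGu.1
    | succ i IH =>
      intro h
      rw [(hstep i (by omega)).2.2.1]
      exact finSupp_mul_swap (IH (by omega)) _ _
  have hInvF : ∀ i, i ≤ m → (Inv (us i)).Finite := fun i h => Inv_finite_of_finSupp (hFS i h)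
  have hlt : ∀ i, i < m → us i (ab i).1 < us i (ab i).2 := by
    intro i h
    obtain ⟨hk1, hk2', heq, hlen⟩ := hstep i h
    rw [permLength_def, permLength_def] at hlen
    refine lt_of_len_succ (by omega) (hInvF i (by omega)) ?_ ?_
    · rw [← heq]; exact hInvF (i+1) (by omega)
    · rw [← heq]; exact hlen
  have hstepdec : ∀ i, i < m → ∀ t, C.k < t → us (i+1) t ≤ us i t := by
    intro i him t ht
    obtain ⟨hk1, hk2', heq, -⟩ := hstep i him
    rw [heq, Equiv.Perm.mul_apply]
    have h1 : t ≠ (ab i).1 := by omega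
    by_cases h2 : t = (ab i).2
    · rw [h2, Equiv.swap_apply_right]
      have := hlt i him
      omega
    · rw [Equiv.swap_apply_of_ne_of_ne h1 h2]
  have hstepinc : ∀ i, i < m → ∀ t, t ≤ C.k → us i t ≤ us (i+1) t := by
    intro i him t ht
    obtain ⟨hk1, hk2', heq, -⟩ := hstep i him
    rw [heq, Equiv.Perm.mul_apply]
    have h2 : t ≠ (ab i).2 := by omega
    by_cases h1 : t = (ab i).1
    · rw [h1, Equiv.swap_apply_left]
      have := hlt i him
      omega
    · rw [Equiv.swap_apply_of_ne_of_ne h1 h2]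
  have hdec : ∀ t, C.k < t → ∀ j, j ≤ m → ∀ i, i ≤ j → us j t ≤ us i t := by
    intro t ht j
    induction j with
    | zero => intro _ i hi; rw [Nat.le_zero.mp hi]
    | succ j IH =>
      intro hjm i hi
      by_cases h : i = j + 1
      · rw [h]
      · have l1 := IH (by omega) i (by omega)
        have l2 := hstepdec j (by omega) t ht
        omega
  have hincg : ∀ t, t ≤ C.k → ∀ j, j ≤ m → ∀ i, i ≤ j → us i t ≤ us j t := by
    intro t ht j
    induction j with
    | zero => intro _ i hi; rw [Nat.le_zero.mp hi]
    | succ j IH =>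
      intro hjm i hi
      by_cases h : i = j + 1
      · rw [h]
      · have l1 := IH (by omega) i (by omega)
        have l2 := hstepinc j (by omega) t ht
        omega
  have hsqueeze : ∀ i, i ≤ m → ∀ t c : ℤ, us 0 t = c → us m t = c → us i t = c := by
    intro i hi t c e0 em
    by_cases htk : t ≤ C.k
    · have l1 := hincg t htk i hi 0 (Nat.zero_le _)
      have l2 := hincg t htk m le_rfl i hi
      omega
    · push_neg at htk
      have l1 := hdec t htk i hi 0 (Nat.zero_le _)
      have l2 := hdec t htk m le_rfl i hi
      omega
  have hGood : ∀ i, i ≤ m → C.Good (us i) := by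
    intro i hi
    constructor
    · intro t hne
      by_contra hc
      apply hne
      refine hsqueeze i hi t t ?_ ?_
      · rw [h0]; by_contra hq; exact hc (hGu.1 t hq)
      · rw [hm]; by_contra hq; exact hc (hGw.1 t hq)
    · intro j hj1 hj2
      refine hsqueeze i hi (C.p j) j ?_ ?_
      · rw [h0]; exact hGu.2 j hj1 hj2
      · rw [hm]; exact hGw.2 j hj1 hj2
  have hdom : ∀ i, i < m →
      C.a ≤ (ab i).1 ∧ (ab i).2 ≤ C.n ∧ (ab i).2 ∉ C.Pset ∧ (ab i).1 ≤ C.r := by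
    intro i hi
    obtain ⟨hk1, hk2', heq, -⟩ := hstep i hi
    have hl := hlt i hi
    have hGi := hGood i (by omega)
    have hGi1 := hGood (i+1) (by omega)
    have e2 : us (i+1) (ab i).2 = us i (ab i).1 := by
      rw [heq, Equiv.Perm.mul_apply, Equiv.swap_apply_right]
    have e1 : us (i+1) (ab i).1 = us i (ab i).2 := by
      rw [heq, Equiv.Perm.mul_apply, Equiv.swap_apply_left]
    have ha1 : C.a ≤ (ab i).1 := by
      by_contra hc
      push_neg at hc
      have f1 : us i (ab i).1 = (ab i).1 := by
        by_contra hq; have := hGi.1 _ hq; omega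
      have f2 : us (i+1) (ab i).1 = (ab i).1 := by
        by_contra hq; have := hGi1.1 _ hq; omega
      omega
    have hb1 : (ab i).2 ≤ C.n := by
      by_contra hc
      push_neg at hc
      have hak : C.a ≤ C.k := C.hk
      have f1 : us i (ab i).2 = (ab i).2 := by
        by_contra hq; have := hGi.1 _ hq; omega
      have f2 : us (i+1) (ab i).2 = (ab i).2 := by
        by_contra hq; have := hGi1.1 _ hq; omega
      omega
    refine ⟨ha1, hb1, ?_, ?_⟩
    · rintro ⟨j, hj1, hj2, hpj⟩
      have f1 : us i (ab i).2 = j := by rw [← hpj]; exact hGi.2 j hj1 hj2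
      have f2 : us (i+1) (ab i).2 = j := by rw [← hpj]; exact hGi1.2 j hj1 hj2
      omega
    · by_cases hrltn : C.r < C.n
      · have := C.k_le_r_of_lt hrltn
        omega
      · have := C.hrn
        omega
  set ψ : ℤ → ℤ := fun b => if h : ∃ t, (C.a ≤ t ∧ t ≤ C.r) ∧ C.φ t = b then h.choose else b
    with hψdef
  have hψ : ∀ b ∈ C.Sset, (C.a ≤ ψ b ∧ ψ b ≤ C.r) ∧ C.φ (ψ b) = b := by
    intro b hb
    have h := C.phi_surj hb
    rw [hψdef]
    simp only [dif_pos h]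
    exact h.choose_spec
  have hbS : ∀ i, i < m → (ab i).2 ∈ C.Sset := by
    intro i hi
    obtain ⟨hd1, hd2, hd3, hd4⟩ := hdom i hi
    obtain ⟨hk1, hk2', -, -⟩ := hstep i hi
    have hak : C.a ≤ C.k := C.hk
    exact ⟨Set.mem_Icc.2 ⟨by omega, hd2⟩, hd3⟩
  have hbk' : ∀ i, i < m → C.k < ψ (ab i).2 ∧ ψ (ab i).2 ≤ C.r ∧ C.a ≤ ψ (ab i).2 := by
    intro i hi
    obtain ⟨hψ1, hψ2⟩ := hψ _ (hbS i hi)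
    obtain ⟨hk1, hk2', -, -⟩ := hstep i hi
    refine ⟨?_, hψ1.2, hψ1.1⟩
    by_contra hq
    push_neg at hq
    have := C.phi_id _ hψ1.1 hψ1.2 hq
    omega
  set vs : ℕ → Equiv.Perm ℤ := fun i =>
    Nat.rec vu (fun i prev => prev * Equiv.swap (ab i).1 (ψ (ab i).2)) i with hvsdef
  have hvs0 : vs 0 = vu := rfl
  have hvsS : ∀ i, vs (i+1) = vs i * Equiv.swap (ab i).1 (ψ (ab i).2) := fun i => rfl
  have hcorr : ∀ i, i < m → C.Comp (us i) (vs i) →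
      C.Good (us (i+1)) ∧ C.Comp (us (i+1)) (vs (i+1)) ∧
      (permLength (us (i+1)) = permLength (us i) + 1 ↔
        permLength (vs (i+1)) = permLength (vs i) + 1) := by
    intro i hi hcompi
    obtain ⟨hd1, hd2, hd3, hd4⟩ := hdom i hi
    obtain ⟨hk1, hk2', heq, -⟩ := hstep i hi
    obtain ⟨hbk1, hbk2, hbk3⟩ := hbk' i hi
    obtain ⟨hψ1, hψ2⟩ := hψ _ (hbS i hi)
    have hres := C.corr (hGood i (by omega)) hcompi hd1 hk1 hd4 hbk1 hbk2
    have heq2 : us (i+1) = us i * Equiv.swap (ab i).1 (C.φ (ψ (ab i).2)) := by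
      rw [heq, hψ2]
    rw [← hvsS i, ← heq2] at hres
    exact hres
  have hcomp : ∀ i, i ≤ m → C.Comp (us i) (vs i) := by
    intro i
    induction i with
    | zero => intro _; rw [h0, hvs0]; exact hCu
    | succ i IH =>
      intro h
      exact (hcorr i (by omega) (IH (by omega))).2.1
  have hlen2 : ∀ i, i < m → permLength (vs (i+1)) = permLength (vs i) + 1 := by
    intro i hi
    exact ((hcorr i hi (hcomp i (by omega))).2.2).mp (hstep i hi).2.2.2
  have hval : ∀ i, i < m → vs i (ab i).1 = us i (ab i).1 := by
    intro i hi
    obtain ⟨hd1, -, -, hd4⟩ := hdom i hi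
    have := (hcomp i (by omega)).2 (ab i).1 hd1 hd4
    rw [this, C.phi_id _ hd1 hd4 (hstep i hi).1]
  refine ⟨m, vs, fun i => ((ab i).1, ψ (ab i).2), hvs0, ?_, ?_, ?_⟩
  · -- vs m = vw
    have h1 : C.Comp w (vs m) := by rw [← hm]; exact hcomp m le_rfl
    exact C.comp_unique h1 hCw
  · intro i hi
    exact ⟨(hstep i hi).1, (hbk' i hi).1, hvsS i, hlen2 i hi⟩
  · intro i j hij hjm
    rw [hval i (by omega), hval j (by omega)]
    exact hinc i j hij hjm

/-- Reverse direction: a chain downstairs lifts to a chain upstairs. -/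
lemma incTo_lift (hGu : C.Good u) (hGw : C.Good w)
    (hCu : C.Comp u vu) (hCw : C.Comp w vw) (h : IncTo C.k vu vw) : IncTo C.k u w := by
  classical
  obtain ⟨m, vs, ab, h0, hm, hstep, hinc⟩ := h
  have hFS : ∀ i, i ≤ m → {t : ℤ | vs i t ≠ t}.Finite := by
    intro i
    induction i with
    | zero => intro _; rw [h0]; exact finSupp_of_InS hCu.1
    | succ i IH =>
      intro h
      rw [(hstep i (by omega)).2.2.1]
      exact finSupp_mul_swap (IH (by omega)) _ _
  have hInvF : ∀ i, i ≤ m → (Inv (vs i)).Finite := fun i h => Inv_finite_of_finSupp (hFS i h)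
  have hlt : ∀ i, i < m → vs i (ab i).1 < vs i (ab i).2 := by
    intro i h
    obtain ⟨hk1, hk2', heq, hlen⟩ := hstep i h
    rw [permLength_def, permLength_def] at hlen
    refine lt_of_len_succ (by omega) (hInvF i (by omega)) ?_ ?_
    · rw [← heq]; exact hInvF (i+1) (by omega)
    · rw [← heq]; exact hlen
  have hstepdec : ∀ i, i < m → ∀ t, C.k < t → vs (i+1) t ≤ vs i t := by
    intro i him t ht
    obtain ⟨hk1, hk2', heq, -⟩ := hstep i him
    rw [heq, Equiv.Perm.mul_apply]
    have h1 : t ≠ (ab i).1 := by omega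
    by_cases h2 : t = (ab i).2
    · rw [h2, Equiv.swap_apply_right]
      have := hlt i him
      omega
    · rw [Equiv.swap_apply_of_ne_of_ne h1 h2]
  have hstepinc : ∀ i, i < m → ∀ t, t ≤ C.k → vs i t ≤ vs (i+1) t := by
    intro i him t ht
    obtain ⟨hk1, hk2', heq, -⟩ := hstep i him
    rw [heq, Equiv.Perm.mul_apply]
    have h2 : t ≠ (ab i).2 := by omega
    by_cases h1 : t = (ab i).1
    · rw [h1, Equiv.swap_apply_left]
      have := hlt i him
      omega
    · rw [Equiv.swap_apply_of_ne_of_ne h1 h2]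
  have hdec : ∀ t, C.k < t → ∀ j, j ≤ m → ∀ i, i ≤ j → vs j t ≤ vs i t := by
    intro t ht j
    induction j with
    | zero => intro _ i hi; rw [Nat.le_zero.mp hi]
    | succ j IH =>
      intro hjm i hi
      by_cases h : i = j + 1
      · rw [h]
      · have l1 := IH (by omega) i (by omega)
        have l2 := hstepdec j (by omega) t ht
        omega
  have hincg : ∀ t, t ≤ C.k → ∀ j, j ≤ m → ∀ i, i ≤ j → vs i t ≤ vs j t := by
    intro t ht j
    induction j with
    | zero => intro _ i hi; rw [Nat.le_zero.mp hi]
    | succ j IH =>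
      intro hjm i hi
      by_cases h : i = j + 1
      · rw [h]
      · have l1 := IH (by omega) i (by omega)
        have l2 := hstepinc j (by omega) t ht
        omega
  have hsqueeze : ∀ i, i ≤ m → ∀ t c : ℤ, vs 0 t = c → vs m t = c → vs i t = c := by
    intro i hi t c e0 em
    by_cases htk : t ≤ C.k
    · have l1 := hincg t htk i hi 0 (Nat.zero_le _)
      have l2 := hincg t htk m le_rfl i hi
      omega
    · push_neg at htk
      have l1 := hdec t htk i hi 0 (Nat.zero_le _)
      have l2 := hdec t htk m le_rfl i hi
      omega
  have hIn : ∀ i, i ≤ m → InS C.a C.r (vs i) := by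
    intro i hi t hne
    by_contra hc
    apply hne
    refine hsqueeze i hi t t ?_ ?_
    · rw [h0]; by_contra hq; exact hc (hCu.1 t hq)
    · rw [hm]; by_contra hq; exact hc (hCw.1 t hq)
  have hdom : ∀ i, i < m → C.a ≤ (ab i).1 ∧ (ab i).2 ≤ C.r := by
    intro i hi
    obtain ⟨hk1, hk2', heq, -⟩ := hstep i hi
    have hl := hlt i hi
    have hGi := hIn i (by omega)
    have hGi1 := hIn (i+1) (by omega)
    have e2 : vs (i+1) (ab i).2 = vs i (ab i).1 := by
      rw [heq, Equiv.Perm.mul_apply, Equiv.swap_apply_right]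
    have e1 : vs (i+1) (ab i).1 = vs i (ab i).2 := by
      rw [heq, Equiv.Perm.mul_apply, Equiv.swap_apply_left]
    constructor
    · by_contra hc
      push_neg at hc
      have f1 : vs i (ab i).1 = (ab i).1 := by
        by_contra hq; have := hGi _ hq; omega
      have f2 : vs (i+1) (ab i).1 = (ab i).1 := by
        by_contra hq; have := hGi1 _ hq; omega
      omega
    · by_contra hc
      push_neg at hc
      have hak : C.a ≤ C.k := C.hk
      have f1 : vs i (ab i).2 = (ab i).2 := by
        by_contra hq; have := hGi _ hq; omega
      have f2 : vs (i+1) (ab i).2 = (ab i).2 := by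
        by_contra hq; have := hGi1 _ hq; omega
      omega
  set us : ℕ → Equiv.Perm ℤ := fun i =>
    Nat.rec u (fun i prev => prev * Equiv.swap (ab i).1 (C.φ (ab i).2)) i with husdef
  have hus0 : us 0 = u := rfl
  have husS : ∀ i, us (i+1) = us i * Equiv.swap (ab i).1 (C.φ (ab i).2) := fun i => rfl
  have hcorr : ∀ i, i < m → C.Good (us i) → C.Comp (us i) (vs i) →
      C.Good (us (i+1)) ∧ C.Comp (us (i+1)) (vs (i+1)) ∧
      (permLength (us (i+1)) = permLength (us i) + 1 ↔
        permLength (vs (i+1)) = permLength (vs i) + 1) := by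
    intro i hi hGoodi hcompi
    obtain ⟨hd1, hd2⟩ := hdom i hi
    obtain ⟨hk1, hk2', heq, -⟩ := hstep i hi
    have hres := C.corr hGoodi hcompi hd1 hk1 (by omega) hk2' hd2
    rw [husS i, heq]
    exact hres
  have hGC : ∀ i, i ≤ m → C.Good (us i) ∧ C.Comp (us i) (vs i) := by
    intro i
    induction i with
    | zero => intro _; rw [h0, hus0]; exact ⟨hGu, hCu⟩
    | succ i IH =>
      intro h
      obtain ⟨hg, hc⟩ := IH (by omega)
      obtain ⟨h1, h2, -⟩ := hcorr i (by omega) hg hc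
      exact ⟨h1, h2⟩
  have hlen2 : ∀ i, i < m → permLength (us (i+1)) = permLength (us i) + 1 := by
    intro i hi
    obtain ⟨hg, hc⟩ := hGC i (by omega)
    exact ((hcorr i hi hg hc).2.2).mpr (hstep i hi).2.2.2
  have hval : ∀ i, i < m → us i (ab i).1 = vs i (ab i).1 := by
    intro i hi
    obtain ⟨hd1, hd2⟩ := hdom i hi
    have ha1r : (ab i).1 ≤ C.r := by
      obtain ⟨hk1, hk2', -, -⟩ := hstep i hi
      omega
    have := (hGC i (by omega)).2.2 (ab i).1 hd1 ha1r
    rw [this, C.phi_id _ hd1 ha1r (hstep i hi).1]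
  have hbig : ∀ i, i < m → C.k < C.φ (ab i).2 := by
    intro i hi
    obtain ⟨hd1, hd2⟩ := hdom i hi
    obtain ⟨hk1, hk2', -, -⟩ := hstep i hi
    have hak : C.a ≤ C.k := C.hk
    exact C.phi_gt_k (by omega) hd2 hk2'
  refine ⟨m, us, fun i => ((ab i).1, C.φ (ab i).2), hus0, ?_, ?_, ?_⟩
  · -- us m = w
    have h1 : C.Comp (us m) vw := by rw [← hm]; exact (hGC m le_rfl).2
    exact C.good_unique (hGC m le_rfl).1 hGw h1 hCw
  · intro i hi
    exact ⟨(hstep i hi).1, hbig i hi, husS i, hlen2 i hi⟩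
  · intro i j hij hjm
    rw [hval i (by omega), hval j (by omega)]
    exact hinc i j hij hjm

/-- The fixed point set transfer. -/
lemma fix_transfer (hGu : C.Good u) (hGw : C.Good w)
    (hCu : C.Comp u vu) (hCw : C.Comp w vw) :
    fixSet C.k C.n u w = fixSet C.k C.r vu vw ∪ Set.Icc (C.r+1) C.n := by
  apply Set.Subset.antisymm
  · rintro c ⟨t, ht1, ht2, hut, hwt⟩
    have hta : C.a ≤ t := by have := C.hk; omega
    by_cases htP : t ∈ C.Pset
    · right
      obtain ⟨j, hj1, hj2, hpj⟩ := htP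
      have : u t = j := by rw [← hpj]; exact hGu.2 j hj1 hj2
      rw [Set.mem_Icc]
      omega
    · left
      obtain ⟨t', ht', hφt⟩ := C.phi_surj ⟨Set.mem_Icc.2 ⟨hta, ht2⟩, htP⟩
      have htk' : C.k < t' := by
        by_contra hq
        push_neg at hq
        have := C.phi_id t' ht'.1 ht'.2 hq
        omega
      refine ⟨t', htk', ht'.2, ?_, ?_⟩
      · rw [hCu.2 t' ht'.1 ht'.2, hφt]; exact hut
      · rw [hCw.2 t' ht'.1 ht'.2, hφt]; exact hwt
  · rintro c (⟨t', ht1, ht2, hut, hwt⟩ | hc)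
    · have hta : C.a ≤ t' := by have := C.hk; omega
      have hφS := C.phi_mem hta ht2
      have hφIcc := Set.mem_Icc.1 hφS.1
      refine ⟨C.φ t', C.phi_gt_k hta ht2 ht1, hφIcc.2, ?_, ?_⟩
      · rw [← hCu.2 t' hta ht2]; exact hut
      · rw [← hCw.2 t' hta ht2]; exact hwt
    · rw [Set.mem_Icc] at hc
      have h1 := C.k_lt_p (j := c) (by omega) hc.2
      have h2 := C.Pset_mem_Icc (s := C.p c) ⟨c, by omega, hc.2, rfl⟩
      exact ⟨C.p c, h1, h2.2, hGu.2 c (by omega) hc.2, hGw.2 c (by omega) hc.2⟩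
end Chains
end Ctx

end S17

theorem stmt17 (a n r : ℤ) (ha : a ≤ 0) (hr : 0 ≤ r) (hrn : r ≤ n)
    (p : ℤ → ℤ) (hp : StrictMonoOn p (Set.Icc (r + 1) n))
    (hpa : a ≤ p (r + 1)) (hpn : p n ≤ n)
    (u w vu vw : Equiv.Perm ℤ)
    (hu : InS a n u) (hw : InS a n w)
    (hup : ∀ j : ℤ, r < j → j ≤ n → u (p j) = j)
    (hwp : ∀ j : ℤ, r < j → j ≤ n → w (p j) = j)
    (hvu : InS a r vu) (hvw : InS a r vw)
    (hiu : Iota a r n p u vu) (hiw : Iota a r n p w vw)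
    (k : ℤ) (hk : a ≤ k) (hk2 : k ≤ p (r + 1) - 1) :
    (IncTo k u w ↔ IncTo k vu vw) ∧
    (IncTo k u w → fixSet k n u w = fixSet k r vu vw ∪ Set.Icc (r + 1) n) := by
  classical
  obtain ⟨φ, hφmono, hφim, hφu⟩ := hiu
  obtain ⟨φ₂, hφ₂mono, hφ₂im, hφ₂w⟩ := hiw
  set C : S17.Ctx := ⟨a, n, r, k, p, φ, ha, hr, hrn, hp, hpa, hpn, hk, hk2, hφmono, hφim⟩
    with hC
  have hGu : C.Good u := ⟨hu, hup⟩
  have hGw : C.Good w := ⟨hw, hwp⟩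
  have hCu : C.Comp u vu := ⟨hvu, fun t h1 h2 => hφu t (Set.mem_Icc.2 ⟨h1, h2⟩)⟩
  have hφeq : ∀ t ∈ Set.Icc a r, φ₂ t = φ t := by
    apply S17.strictMonoOn_eq_of_image_eq hφ₂mono hφmono
    rw [hφim, hφ₂im]
  have hCw : C.Comp w vw := by
    refine ⟨hvw, fun t h1 h2 => ?_⟩
    have := hφ₂w t (Set.mem_Icc.2 ⟨h1, h2⟩)
    rwa [hφeq t (Set.mem_Icc.2 ⟨h1, h2⟩)] at this
  constructor
  · exact ⟨fun h => C.incTo_transfer hGu hGw hCu hCw h,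
      fun h => C.incTo_lift hGu hGw hCu hCw h⟩
  · intro _
    exact C.fix_transfer hGu hGw hCu hCw
end

section
/- Let a ≤ 0 < n, let p_1 < ⋯ < p_n be integers with p_{j+1} - p_j ∈ {1,2} and p_j ≤ j, set α_i = p_{i+1} - 1, and let (u_1, …, u_n) be a sequence in S_{[a,n]} with u_i →^{α_i} u_{i+1} for each i ∈ [1,n-1], where u_n(p_j) = j for all j. Assume for each j < i that u_i([a, α_j]) ⊆ [a, j] (with α_0 := p_1 - 1). Then for every value i ∈ [1,n], the position of i is constant along the initial segment of the chain: u_1^{-1}(i) = u_2^{-1}(i) = ⋯ = u_i^{-1}(i). -/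
def InvSet (w : Equiv.Perm ℤ) : Set (ℤ × ℤ) :=
  {p : ℤ × ℤ | p.1 < p.2 ∧ w p.2 < w p.1}

lemma permLength_eq (w : Equiv.Perm ℤ) : permLength w = (InvSet w).ncard := rfl

lemma invSet_finite {v : Equiv.Perm ℤ} (h : FinSupp v) : (InvSet v).Finite := by
  classical
  have hS : ({x : ℤ | v x ≠ x} ∪ v '' {x : ℤ | v x ≠ x}).Finite := h.union (h.image v)
  obtain ⟨hi, hhi⟩ := hS.bddAbove
  obtain ⟨lo, hlo⟩ := hS.bddBelow
  have hmem : ∀ x : ℤ, v x ≠ x → (lo ≤ x ∧ x ≤ hi) ∧ (lo ≤ v x ∧ v x ≤ hi) := by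
    intro x hx
    have h1 : x ∈ ({x : ℤ | v x ≠ x} ∪ v '' {x : ℤ | v x ≠ x}) := Or.inl hx
    have h2 : v x ∈ ({x : ℤ | v x ≠ x} ∪ v '' {x : ℤ | v x ≠ x}) := Or.inr ⟨x, hx, rfl⟩
    exact ⟨⟨hlo h1, hhi h1⟩, ⟨hlo h2, hhi h2⟩⟩
  apply Set.Finite.subset ((Set.finite_Icc lo hi).prod (Set.finite_Icc lo hi))
  rintro ⟨p, q⟩ ⟨hpq0, hv0⟩
  have hpq : p < q := hpq0
  have hv : v q < v p := hv0
  have hq : q ≤ hi := by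
    by_contra hq; push_neg at hq
    by_cases hqf : v q = q
    · by_cases hpf : v p = p
      · rw [hqf, hpf] at hv; omega
      · have := (hmem p hpf).2.2; rw [hqf] at hv; omega
    · have := (hmem q hqf).1.2; omega
  have hp : lo ≤ p := by
    by_contra hp; push_neg at hp
    by_cases hpf : v p = p
    · by_cases hqf : v q = q
      · rw [hqf, hpf] at hv; omega
      · have := (hmem q hqf).2.1; rw [hpf] at hv; omega
    · have := (hmem p hpf).1.1; omega
  simp only [Set.mem_prod, Set.mem_Icc]
  omega

lemma finSupp_of_InS {a n : ℤ} {v : Equiv.Perm ℤ} (h : InS a n v) : FinSupp v :=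
  Set.Finite.subset (Set.finite_Icc a n) (fun x hx => Set.mem_Icc.2 (h x hx))

lemma finSupp_mul_swap {v : Equiv.Perm ℤ} (h : FinSupp v) (i j : ℤ) :
    FinSupp (v * Equiv.swap i j) := by
  apply Set.Finite.subset (h.union ((Set.finite_singleton i).union (Set.finite_singleton j)))
  intro x hx
  by_cases hxi : x = i
  · exact Or.inr (Or.inl hxi)
  by_cases hxj : x = j
  · exact Or.inr (Or.inr hxj)
  · left
    have hh : (v * Equiv.swap i j) x = v x := by
      rw [Equiv.Perm.mul_apply, Equiv.swap_apply_of_ne_of_ne hxi hxj]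
    have hx' : (v * Equiv.swap i j) x ≠ x := hx
    rw [hh] at hx'
    exact hx'

private def bf (v : Equiv.Perm ℤ) (i j : ℤ) (p : ℤ × ℤ) : ℤ × ℤ :=
  if p.2 = i ∧ ¬(p.1 < j ∧ v j < v p.1) then (p.1, j)
  else if p.1 = j ∧ ¬(i < p.2 ∧ v p.2 < v i) then (i, p.2)
  else p

private def bg (v : Equiv.Perm ℤ) (i j : ℤ) (q : ℤ × ℤ) : ℤ × ℤ :=
  if q.2 = j ∧ q.1 ≠ i ∧ ¬(q.1 < j ∧ v j < v q.1) then (q.1, i)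
  else if q.1 = i ∧ q.2 ≠ j ∧ ¬(i < q.2 ∧ v q.2 < v i) then (j, q.2)
  else q

lemma permLength_mul_swap_gt {v : Equiv.Perm ℤ} {i j : ℤ} (hij : i < j) (hv : v i < v j)
    (hfv : (InvSet v).Finite) (hfw : (InvSet (v * Equiv.swap i j)).Finite) :
    permLength v + 1 ≤ permLength (v * Equiv.swap i j) := by
  classical
  set w := v * Equiv.swap i j with hwdef
  have hwi : w i = v j := by rw [hwdef, Equiv.Perm.mul_apply, Equiv.swap_apply_left]
  have hwj : w j = v i := by rw [hwdef, Equiv.Perm.mul_apply, Equiv.swap_apply_right]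
  have hwo : ∀ x : ℤ, x ≠ i → x ≠ j → w x = v x := fun x h1 h2 => by
    rw [hwdef, Equiv.Perm.mul_apply, Equiv.swap_apply_of_ne_of_ne h1 h2]
  have hij' : ((i, j) : ℤ × ℤ) ∉ InvSet v := fun h => absurd h.2 (by exact not_lt.2 (le_of_lt hv))
  have hmain : ∀ q ∈ insert ((i, j) : ℤ × ℤ) (InvSet v),
      bf v i j q ∈ InvSet w ∧ bg v i j (bf v i j q) = q := by
    rintro ⟨p1, p2⟩ hp
    rw [Set.mem_insert_iff] at hp
    rcases hp with heq | hmem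
    · rw [Prod.mk.injEq] at heq
      obtain ⟨h1, h2⟩ := heq
      have hbf : bf v i j (p1, p2) = (p1, p2) := by
        simp [bf, show ¬ p2 = i by omega, show ¬ p1 = j by omega]
      rw [hbf]
      refine ⟨⟨by omega, ?_⟩, ?_⟩
      · rw [h1, h2, hwi, hwj]; exact hv
      · simp [bg, h1, h2]
    · have hp1 : p1 < p2 := hmem.1
      have hp2 : v p2 < v p1 := hmem.2
      by_cases hc1 : p2 = i
      · have hp2a : v i < v p1 := by rw [← hc1]; exact hp2
        by_cases hc2 : p1 < j ∧ v j < v p1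
        · -- B2 : identity
          have hbf : bf v i j (p1, p2) = (p1, p2) := by
            simp [bf, hc1, hc2.1, hc2.2, show ¬ p1 = j by omega]
          rw [hbf]
          refine ⟨⟨hp1, ?_⟩, ?_⟩
          · rw [hc1, hwi, hwo p1 (by omega) (by omega)]; exact hc2.2
          · simp [bg, show ¬ p2 = j by omega, show ¬ p1 = i by omega]
        · -- B1 : output (p1, j)
          have hbf : bf v i j (p1, p2) = (p1, j) := by
            simp [bf, hc1, hc2]
          rw [hbf]
          refine ⟨⟨by omega, ?_⟩, ?_⟩
          · rw [hwj, hwo p1 (by omega) (by omega)]; exact hp2a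
          · simp [bg, hc1, hc2, show ¬ p1 = i by omega]
      · by_cases hd1 : p1 = j
        · have hp2b : v p2 < v j := by rw [← hd1]; exact hp2
          have hjp2 : j < p2 := by omega
          by_cases hd2 : i < p2 ∧ v p2 < v i
          · -- B4 : identity
            have hbf : bf v i j (p1, p2) = (p1, p2) := by
              simp [bf, hd1, hd2.1, hd2.2, show ¬ p2 = i by omega]
            rw [hbf]
            refine ⟨⟨hp1, ?_⟩, ?_⟩
            · rw [hd1, hwj, hwo p2 hc1 (by omega)]; exact hd2.2
            · simp [bg, show ¬ p2 = j by omega, show ¬ p1 = i by omega]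
          · -- B3 : output (i, p2)
            have hbf : bf v i j (p1, p2) = (i, p2) := by
              simp [bf, hc1, hd1, hd2]
            rw [hbf]
            refine ⟨⟨by omega, ?_⟩, ?_⟩
            · rw [hwi, hwo p2 hc1 (by omega)]; exact hp2b
            · simp [bg, hd1, hd2, show ¬ p2 = j by omega]
        · -- B5 : identity
          have hbf : bf v i j (p1, p2) = (p1, p2) := by
            simp [bf, hc1, hd1]
          rw [hbf]
          constructor
          · refine ⟨hp1, ?_⟩
            by_cases he1 : p1 = i
            · by_cases he2 : p2 = j
              · rw [he1, he2, hwj, hwi]; exact hv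
              · rw [he1] at hp2
                rw [hwo p2 hc1 he2, he1, hwi]; omega
            · by_cases he2 : p2 = j
              · rw [he2] at hp2
                rw [he2, hwj, hwo p1 he1 hd1]; omega
              · rw [hwo p2 hc1 he2, hwo p1 he1 hd1]; exact hp2
          · by_cases he2 : p2 = j
            · have hp2c : v j < v p1 := by rw [← he2]; exact hp2
              simp [bg, he2, hp2c, show p1 < j by omega]
            · by_cases he1 : p1 = i
              · have hp2d : v p2 < v i := by rw [← he1]; exact hp2
                simp [bg, he2, he1, hp2d, show i < p2 by omega]
              · simp [bg, he2, he1]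
  have hinj : Set.InjOn (bf v i j) (insert ((i, j) : ℤ × ℤ) (InvSet v)) := by
    intro x hx y hy hxy
    rw [← (hmain x hx).2, ← (hmain y hy).2, hxy]
  have hcard : (insert ((i, j) : ℤ × ℤ) (InvSet v)).ncard ≤ (InvSet w).ncard :=
    Set.ncard_le_ncard_of_injOn (bf v i j) (fun q hq => (hmain q hq).1) hinj hfw
  rw [Set.ncard_insert_of_notMem hij' hfv] at hcard
  rw [permLength_eq, permLength_eq]
  exact hcard

lemma bcover_increasing {u : Equiv.Perm ℤ} {i j : ℤ} (hij : i < j)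
    (hlen : permLength (u * Equiv.swap i j) = permLength u + 1)
    (hfin : (InvSet u).Finite) : u i < u j := by
  by_contra hle
  push_neg at hle
  have hne : u j ≠ u i := fun h => absurd (u.injective h) (by omega)
  have hlt : u j < u i := lt_of_le_of_ne hle hne
  set w := u * Equiv.swap i j with hwdef
  have hwi : w i = u j := by rw [hwdef, Equiv.Perm.mul_apply, Equiv.swap_apply_left]
  have hwj : w j = u i := by rw [hwdef, Equiv.Perm.mul_apply, Equiv.swap_apply_right]
  have hback : w * Equiv.swap i j = u := by
    rw [hwdef, mul_assoc, Equiv.swap_mul_self, mul_one]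
  have hfw : (InvSet w).Finite := by
    by_contra hinf
    have h0 : (InvSet w).ncard = 0 := Set.Infinite.ncard hinf
    rw [permLength_eq] at hlen
    omega
  have hkey := permLength_mul_swap_gt hij (by rw [hwi, hwj]; exact hlt) hfw
    (by rw [hback]; exact hfin)
  rw [hback] at hkey
  omega

theorem stmt19 (a n : ℤ) (ha : a ≤ 0) (hn : 0 < n)
    (p : ℤ → ℤ) (hp : StrictMonoOn p (Set.Icc 1 n))
    (hstep : ∀ j : ℤ, 1 ≤ j → j ≤ n - 1 → p (j + 1) - p j = 1 ∨ p (j + 1) - p j = 2)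
    (hpj : ∀ j : ℤ, 1 ≤ j → j ≤ n → p j ≤ j)
    (u : ℤ → Equiv.Perm ℤ)
    (hS : ∀ i : ℤ, 1 ≤ i → i ≤ n → InS a n (u i))
    (hchain : ∀ i : ℤ, 1 ≤ i → i ≤ n - 1 → IncTo (p (i + 1) - 1) (u i) (u (i + 1)))
    (hun : ∀ j : ℤ, 1 ≤ j → j ≤ n → u n (p j) = j)
    (himg : ∀ j i : ℤ, 0 ≤ j → j < i → i ≤ n →
        ∀ x : ℤ, a ≤ x → x ≤ p (j + 1) - 1 → a ≤ u i x ∧ u i x ≤ j) :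
    ∀ i : ℤ, 1 ≤ i → i ≤ n →
      ∀ i' : ℤ, 1 ≤ i' → i' ≤ i → (u i').symm i = (u 1).symm i := by
  have key : ∀ m : ℤ, 1 ≤ m → m ≤ n - 1 → ∀ i : ℤ, m < i → i ≤ n →
      (u (m + 1)).symm i = (u m).symm i := by
    intro m hm1 hm2 i hmi hin
    set k := p (m + 1) - 1 with hk
    obtain ⟨M, us, ab, h0, hM, hcov, -⟩ := hchain m hm1 hm2
    have hup : ∀ x : ℤ, x ≤ k → u (m + 1) x ≤ m := by
      intro x hx
      by_cases hax : a ≤ x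
      · exact (himg m (m + 1) (by omega) (by omega) (by omega) x hax (by omega)).2
      · by_cases hfx : u (m + 1) x = x
        · omega
        · exact absurd ((hS (m + 1) (by omega) (by omega) x hfx).1) hax
    have hfin : ∀ r : ℕ, r ≤ M → FinSupp (us r) := by
      intro r
      induction r with
      | zero => intro _; rw [h0]; exact finSupp_of_InS (hS m (by omega) (by omega))
      | succ r ih =>
        intro hr
        obtain ⟨-, -, heq, -⟩ := hcov r (by omega)
        rw [heq]
        exact finSupp_mul_swap (ih (by omega)) _ _
    have hstepmono : ∀ r : ℕ, r < M → ∀ x : ℤ, x ≤ k → us r x ≤ us (r + 1) x := by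
      intro r hr x hx
      obtain ⟨ha', hb', heq, hlen⟩ := hcov r hr
      have hlen' : permLength (us r * Equiv.swap (ab r).1 (ab r).2) = permLength (us r) + 1 := by
        rw [← heq]; exact hlen
      have hlt : us r (ab r).1 < us r (ab r).2 :=
        bcover_increasing (by omega) hlen' (invSet_finite (hfin r (by omega)))
      rw [heq, Equiv.Perm.mul_apply]
      by_cases hxa : x = (ab r).1
      · rw [hxa, Equiv.swap_apply_left]; omega
      · rw [Equiv.swap_apply_of_ne_of_ne hxa (by omega : x ≠ (ab r).2)]
    have hmono : ∀ r s : ℕ, r ≤ s → ∀ x : ℤ, x ≤ k → s ≤ M → us r x ≤ us s x := by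
      intro r s hrs x hx
      induction s, hrs using Nat.le_induction with
      | base => intro _; exact le_refl _
      | succ s hs ih =>
        intro hsM
        exact le_trans (ih (by omega)) (hstepmono s (by omega) x hx)
    set t := (u m).symm i with htdef
    have hut : u m t = i := Equiv.apply_symm_apply (u m) i
    have htk : k < t := by
      by_contra hle
      push_neg at hle
      have h1 : us 0 t ≤ us M t := hmono 0 M (Nat.zero_le M) t hle (le_refl M)
      rw [h0, hM] at h1
      have h2 := hup t hle
      omega
    have hfix : ∀ r : ℕ, r ≤ M → us r t = i := by
      intro r
      induction r with
      | zero => intro _; rw [h0]; exact hut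
      | succ r ih =>
        intro hr
        obtain ⟨ha', hb', heq, hlen⟩ := hcov r (by omega)
        have hir := ih (by omega)
        by_cases htb : t = (ab r).2
        · exfalso
          have hval : us (r + 1) (ab r).1 = i := by
            rw [heq, Equiv.Perm.mul_apply, Equiv.swap_apply_left, ← htb, hir]
          have h1 : us (r + 1) (ab r).1 ≤ us M (ab r).1 :=
            hmono (r + 1) M (by omega) (ab r).1 ha' (le_refl M)
          rw [hM] at h1
          have h2 := hup (ab r).1 ha'
          omega
        · rw [heq, Equiv.Perm.mul_apply,
            Equiv.swap_apply_of_ne_of_ne (by omega : t ≠ (ab r).1) htb]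
          exact hir
    have hfinal : u (m + 1) t = i := by rw [← hM]; exact hfix M (le_refl M)
    rw [← hfinal, Equiv.symm_apply_apply]
  intro i hi1 hin i' hi'1 hi'le
  have main : ∀ z : ℤ, 1 ≤ z → z ≤ i → (u z).symm i = (u 1).symm i :=
    Int.le_induction (fun _ => rfl)
      (fun z hz ih hle => by
        rw [key z hz (by omega) i (by omega) hin]
        exact ih (by omega))
  exact main i' hi'1 hi'le
end
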